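/- arXiv:2308.11132 — 7 statements merged into one kernel-verified Lean document; each statement's English description precedes it below -/
import Mathlib

section
/- The number of isotropic submodules of (ZMod ℓ^m)⁴ (with respect to the standard symplectic form) that are isomorphic as ZMod ℓ^m-modules to (ZMod ℓ^m)² (the 'maximal isotropic planes') is exactly ℓ^{3m} + ℓ^{3m−1} + ℓ^{3m−2} + ℓ^{3m−3}. -/
namespace Stmt0Aux
open Submodule

open Submodule

variable {A : Type*} [CommRing A]

lemma mem_left (v w : Fin 4 → A) : v ∈ span A {v, w} :=
  subset_span (Set.mem_insert _ _)

lemma mem_right (v w : Fin 4 → A) : w ∈ span A {v, w} :=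
  subset_span (Set.mem_insert_of_mem _ rfl)

/-- extract coefficients from membership in a span of a pair, pointwise form -/
lemma exists_coeffs {v w x : Fin 4 → A} (h : x ∈ span A {v, w}) :
    ∃ s t : A, ∀ k, s * v k + t * w k = x k := by
  obtain ⟨s, t, hst⟩ := Submodule.mem_span_pair.mp h
  exact ⟨s, t, fun k => by
    have := congrFun hst k
    simpa [Pi.add_apply, Pi.smul_apply, smul_eq_mul] using this⟩

lemma span_pair_eq_of_comb {v w v' w' : Fin 4 → A}
    (h1 : ∃ s t : A, ∀ k, s * v k + t * w k = v' k)
    (h2 : ∃ s t : A, ∀ k, s * v k + t * w k = w' k)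
    (h3 : ∃ s t : A, ∀ k, s * v' k + t * w' k = v k)
    (h4 : ∃ s t : A, ∀ k, s * v' k + t * w' k = w k) :
    span A {v, w} = span A {v', w'} := by
  have key : ∀ {a b c : Fin 4 → A}, (∃ s t : A, ∀ k, s * a k + t * b k = c k) →
      c ∈ span A {a, b} := by
    rintro a b c ⟨s, t, hst⟩
    exact Submodule.mem_span_pair.mpr ⟨s, t, funext fun k => by
      simpa [Pi.add_apply, Pi.smul_apply, smul_eq_mul] using hst k⟩
  apply le_antisymm
  · rw [span_le]
    rintro x (rfl | rfl)
    exacts [key h3, key h4]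
  · rw [span_le]
    rintro x (rfl | rfl)
    exacts [key h1, key h2]

/-- change of basis to pivot form -/
lemma pivot_span (v w : Fin 4 → A) (i j : Fin 4) (r : A)
    (hr : r * (v i * w j - v j * w i) = 1) :
    span A {v, w} =
      span A {(fun k => r * (w j * v k - v j * w k)), (fun k => r * (v i * w k - w i * v k))} := by
  apply span_pair_eq_of_comb
  · exact ⟨r * w j, -(r * v j), fun k => by ring⟩
  · exact ⟨-(r * w i), r * v i, fun k => by ring⟩
  · exact ⟨v i, v j, fun k => by linear_combination v k * hr⟩
  · exact ⟨w i, w j, fun k => by linear_combination w k * hr⟩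

/-- isotropy propagates to the span -/
lemma isotropic_span {v w : Fin 4 → A}
    (hvw : v 0 * w 1 - v 1 * w 0 + v 2 * w 3 - v 3 * w 2 = 0) :
    ∀ x ∈ span A {v, w}, ∀ y ∈ span A {v, w},
      x 0 * y 1 - x 1 * y 0 + x 2 * y 3 - x 3 * y 2 = 0 := by
  intro x hx y hy
  obtain ⟨s, t, hst⟩ := exists_coeffs hx
  obtain ⟨s', t', hst'⟩ := exists_coeffs hy
  rw [← hst 0, ← hst 1, ← hst 2, ← hst 3, ← hst' 0, ← hst' 1, ← hst' 2, ← hst' 3]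
  linear_combination (s * t' - t * s') * hvw

/-- span of a pivot pair is free of rank 2 -/
lemma nonempty_equiv (v w : Fin 4 → A) (i j : Fin 4)
    (hvi : v i = 1) (hvj : v j = 0) (hwi : w i = 0) (hwj : w j = 1) :
    Nonempty ((span A {v, w}) ≃ₗ[A] (Fin 2 → A)) := by
  let φ : (Fin 2 → A) →ₗ[A] (Fin 4 → A) :=
    { toFun := fun f => f 0 • v + f 1 • w
      map_add' := by
        intro f g; simp only [Pi.add_apply, add_smul]; abel
      map_smul' := by
        intro c f; simp only [Pi.smul_apply, smul_eq_mul, RingHom.id_apply, smul_smul, smul_add] }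
  have hinj : Function.Injective φ := by
    rw [← LinearMap.ker_eq_bot, LinearMap.ker_eq_bot']
    intro f hf
    have h0 : f 0 = 0 := by
      have := congrFun hf i
      simpa [φ, hvi, hwi] using this
    have h1 : f 1 = 0 := by
      have := congrFun hf j
      simpa [φ, hvj, hwj] using this
    funext k
    fin_cases k <;> simpa [h0, h1]
  have hrange : LinearMap.range φ = span A {v, w} := by
    apply le_antisymm
    · rintro x ⟨f, rfl⟩
      exact add_mem (smul_mem _ _ (mem_left v w)) (smul_mem _ _ (mem_right v w))
    · rw [span_le]
      rintro x (rfl | rfl)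
      · exact ⟨fun k => if k = 0 then 1 else 0, by simp [φ]⟩
      · exact ⟨fun k => if k = 0 then 0 else 1, by simp [φ]⟩
  exact ⟨(LinearEquiv.ofEq _ _ hrange.symm).trans (LinearEquiv.ofInjective φ hinj).symm⟩


open Submodule

variable {ℓ m : ℕ}

lemma neZero_pow (hℓ : ℓ.Prime) : NeZero (ℓ ^ m) := ⟨pow_ne_zero _ hℓ.pos.ne'⟩

lemma dvd_iff_val (hℓ : ℓ.Prime) (hm : 1 ≤ m) (x : ZMod (ℓ ^ m)) :
    (ℓ : ZMod (ℓ ^ m)) ∣ x ↔ ℓ ∣ x.val := by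
  haveI := neZero_pow (m := m) hℓ
  constructor
  · rintro ⟨y, rfl⟩
    rw [ZMod.val_mul]
    refine (Nat.dvd_mod_iff (dvd_pow_self ℓ (by omega))).mpr ?_
    refine Dvd.dvd.mul_right ?_ _
    rw [ZMod.val_natCast]
    exact (Nat.dvd_mod_iff (dvd_pow_self ℓ (by omega))).mpr dvd_rfl
  · rintro ⟨k, hk⟩
    refine ⟨(k : ZMod (ℓ ^ m)), ?_⟩
    have hx : x = ((x.val : ℕ) : ZMod (ℓ ^ m)) := (ZMod.natCast_rightInverse x).symm
    rw [hx, hk]; push_cast; ring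

lemma isUnit_of_not_dvd (hℓ : ℓ.Prime) (hm : 1 ≤ m) {x : ZMod (ℓ ^ m)}
    (h : ¬ (ℓ : ZMod (ℓ ^ m)) ∣ x) : IsUnit x := by
  haveI := neZero_pow (m := m) hℓ
  rw [dvd_iff_val hℓ hm] at h
  have hc : Nat.Coprime x.val (ℓ ^ m) :=
    Nat.Coprime.pow_right _ (((Nat.Prime.coprime_iff_not_dvd hℓ).mpr h).symm)
  have := (ZMod.isUnit_iff_coprime x.val (ℓ ^ m)).mpr hc
  rwa [ZMod.natCast_rightInverse x] at this

lemma not_dvd_one (hℓ : ℓ.Prime) (hm : 1 ≤ m) : ¬ (ℓ : ZMod (ℓ ^ m)) ∣ 1 := by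
  haveI := neZero_pow (m := m) hℓ
  rw [dvd_iff_val hℓ hm]
  have hlt : 1 < ℓ ^ m :=
    lt_of_lt_of_le hℓ.one_lt (Nat.le_self_pow (by omega) ℓ)
  have h1 : (1 : ZMod (ℓ ^ m)).val = 1 := by
    haveI : Fact (1 < ℓ ^ m) := ⟨hlt⟩
    exact ZMod.val_one (ℓ ^ m)
  rw [h1]
  exact fun hd => hℓ.one_lt.ne' (Nat.dvd_one.mp hd)

lemma pow_pred_mul_eq_zero_iff (hℓ : ℓ.Prime) (hm : 1 ≤ m) (x : ZMod (ℓ ^ m)) :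
    (ℓ : ZMod (ℓ ^ m)) ^ (m - 1) * x = 0 ↔ (ℓ : ZMod (ℓ ^ m)) ∣ x := by
  haveI := neZero_pow (m := m) hℓ
  have hpow : ℓ ^ (m - 1) * ℓ = ℓ ^ m := by
    rw [← pow_succ, Nat.sub_add_cancel hm]
  constructor
  · intro h
    have hx : x = ((x.val : ℕ) : ZMod (ℓ ^ m)) := (ZMod.natCast_rightInverse x).symm
    rw [hx] at h
    have hcast : ((ℓ ^ (m - 1) * x.val : ℕ) : ZMod (ℓ ^ m)) = 0 := by push_cast; exact h
    have hdvd : ℓ ^ m ∣ ℓ ^ (m - 1) * x.val := (ZMod.natCast_eq_zero_iff _ _).mp hcast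
    obtain ⟨c, hc⟩ := hdvd
    have h2 : ℓ ^ m * c = ℓ ^ (m - 1) * (ℓ * c) := by rw [← hpow]; ring
    have h3 : x.val = ℓ * c :=
      Nat.eq_of_mul_eq_mul_left (pow_pos hℓ.pos _) (hc.trans h2)
    exact (dvd_iff_val hℓ hm x).mpr ⟨c, h3⟩
  · rintro ⟨y, rfl⟩
    have h1 : (ℓ : ZMod (ℓ ^ m)) ^ (m - 1) * ((ℓ : ZMod (ℓ ^ m)) * y)
        = ((ℓ ^ (m - 1) * ℓ : ℕ) : ZMod (ℓ ^ m)) * y := by push_cast; ring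
    rw [h1, hpow, ZMod.natCast_self, zero_mul]



open Submodule

variable {ℓ m : ℕ}



def Ell (ℓ m : ℕ) : Type := {x : ZMod (ℓ ^ m) // (ℓ : ZMod (ℓ ^ m)) ∣ x}

def P01 (ℓ m : ℕ) : Type :=
  {p : ZMod (ℓ ^ m) × ZMod (ℓ ^ m) × ZMod (ℓ ^ m) × ZMod (ℓ ^ m) //
    p.1 * p.2.2.2 - p.2.1 * p.2.2.1 = -1}

def Param (ℓ m : ℕ) : Type :=
  P01 ℓ m ⊕ (ZMod (ℓ ^ m) × ZMod (ℓ ^ m) × Ell ℓ m) ⊕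
    (ZMod (ℓ ^ m) × Ell ℓ m × Ell ℓ m) ⊕ (Ell ℓ m × Ell ℓ m × ZMod (ℓ ^ m)) ⊕
    (Ell ℓ m × Ell ℓ m × Ell ℓ m)

def Psi (ℓ m : ℕ) : Param ℓ m → Submodule (ZMod (ℓ ^ m)) (Fin 4 → ZMod (ℓ ^ m))
  | .inl p =>
      span _ {![1, 0, p.1.1, p.1.2.1], ![0, 1, p.1.2.2.1, p.1.2.2.2]}
  | .inr (.inl (a, b3, t)) => span _ {![1, a, 0, t.1], ![0, t.1, 1, b3]}
  | .inr (.inr (.inl (a, x1, x2))) => span _ {![1, a, -x1.1, 0], ![0, x1.1, x2.1, 1]}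
  | .inr (.inr (.inr (.inl (x0, y0, b3)))) => span _ {![x0.1, 1, 0, -y0.1], ![y0.1, 0, 1, b3]}
  | .inr (.inr (.inr (.inr (x0, y0, y2)))) => span _ {![x0.1, 1, y0.1, 0], ![y0.1, 0, y2.1, 1]}

def Pred (ℓ m : ℕ) (H : Submodule (ZMod (ℓ ^ m)) (Fin 4 → ZMod (ℓ ^ m))) : Prop :=
  (∀ x ∈ H, ∀ y ∈ H,
    x 0 * y 1 - x 1 * y 0 + x 2 * y 3 - x 3 * y 2 = (0 : ZMod (ℓ ^ m))) ∧
  Nonempty (H ≃ₗ[ZMod (ℓ ^ m)] (Fin 2 → ZMod (ℓ ^ m)))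

lemma pred_psi (ℓ m : ℕ) (p : Param ℓ m) : Pred ℓ m (Psi ℓ m p) := by
  obtain ⟨⟨a, b, c, d⟩, hp⟩ | ⟨a, b3, t⟩ | ⟨a, x1, x2⟩ | ⟨x0, y0, b3⟩ | ⟨x0, y0, y2⟩ := p <;>
    constructor
  · exact isotropic_span (by simp; linear_combination hp)
  · exact nonempty_equiv _ _ 0 1 (by simp) (by simp) (by simp) (by simp)
  · exact isotropic_span (by simp)
  · exact nonempty_equiv _ _ 0 2 (by simp) (by simp) (by simp) (by simp)
  · exact isotropic_span (by simp)
  · exact nonempty_equiv _ _ 0 3 (by simp) (by simp) (by simp) (by simp)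
  · exact isotropic_span (by simp)
  · exact nonempty_equiv _ _ 1 2 (by simp) (by simp) (by simp) (by simp)
  · exact isotropic_span (by simp)
  · exact nonempty_equiv _ _ 1 3 (by simp) (by simp) (by simp) (by simp)

def ellEquiv (hℓ : ℓ.Prime) (hm : 1 ≤ m) : Ell ℓ m ≃ Fin (ℓ ^ (m - 1)) := by
  haveI : NeZero (ℓ ^ m) := ⟨pow_ne_zero _ hℓ.pos.ne'⟩
  have hpow : ℓ ^ (m - 1) * ℓ = ℓ ^ m := by rw [← pow_succ, Nat.sub_add_cancel hm]
  refine
  { toFun := fun x => ⟨x.1.val / ℓ, ?_⟩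
    invFun := fun k => ⟨((ℓ * k.1 : ℕ) : ZMod (ℓ ^ m)), ⟨(k.1 : ZMod (ℓ ^ m)), by push_cast; ring⟩⟩
    left_inv := ?_
    right_inv := ?_ }
  · have := x.1.val_lt
    rw [Nat.div_lt_iff_lt_mul hℓ.pos, hpow]
    exact x.1.val_lt
  · rintro ⟨x, hx⟩
    have hd : ℓ ∣ x.val := (dvd_iff_val hℓ hm x).mp hx
    apply Subtype.ext
    simp only []
    rw [Nat.mul_div_cancel' hd]
    exact ZMod.natCast_rightInverse x
  · rintro ⟨k, hk⟩
    apply Fin.ext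
    simp only []
    rw [ZMod.val_natCast, Nat.mod_eq_of_lt, Nat.mul_div_cancel_left _ hℓ.pos]
    calc ℓ * k < ℓ * ℓ ^ (m - 1) := (Nat.mul_lt_mul_left hℓ.pos).mpr hk
      _ = ℓ ^ m := by rw [mul_comm]; exact hpow

lemma card_Ell (hℓ : ℓ.Prime) (hm : 1 ≤ m) : Nat.card (Ell ℓ m) = ℓ ^ (m - 1) := by
  rw [Nat.card_congr (ellEquiv hℓ hm), Nat.card_eq_fintype_card, Fintype.card_fin]

instance (ℓ m : ℕ) [NeZero (ℓ ^ m)] : Finite (Ell ℓ m) := by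
  unfold Ell; infer_instance

lemma dvd_contra (hℓ : ℓ.Prime) (hm : 1 ≤ m) {t u : ZMod (ℓ ^ m)}
    (ht : (ℓ : ZMod (ℓ ^ m)) ∣ t) (h : u * t = 1) : False :=
  not_dvd_one hℓ hm (h ▸ ht.mul_left u)

section Cross
variable (hℓ : ℓ.Prime) (hm : 1 ≤ m)
include hℓ hm

set_option maxHeartbeats 1000000 in
lemma cross_AB {a b c d a' b' t : ZMod (ℓ ^ m)} (ht : (ℓ : ZMod (ℓ ^ m)) ∣ t)
    (h : span (ZMod (ℓ ^ m)) {![1, 0, a, b], ![0, 1, c, d]} =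
      span (ZMod (ℓ ^ m)) {![1, a', 0, t], ![0, t, 1, b']}) : False := by
  obtain ⟨s, u, hc⟩ := exists_coeffs (h ▸ mem_right ![1, 0, a, b] ![0, 1, c, d])
  have h0 := hc 0; have h1 := hc 1
  simp at h0 h1
  exact dvd_contra hℓ hm ht (by rw [h0] at h1; simpa using h1)

lemma cross_AC {a b c d a' x1 x2 : ZMod (ℓ ^ m)} (hx1 : (ℓ : ZMod (ℓ ^ m)) ∣ x1)
    (h : span (ZMod (ℓ ^ m)) {![1, 0, a, b], ![0, 1, c, d]} =
      span (ZMod (ℓ ^ m)) {![1, a', -x1, 0], ![0, x1, x2, 1]}) : False := by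
  obtain ⟨s, u, hc⟩ := exists_coeffs (h ▸ mem_right ![1, 0, a, b] ![0, 1, c, d])
  have h0 := hc 0; have h1 := hc 1
  simp at h0 h1
  exact dvd_contra hℓ hm hx1 (by rw [h0] at h1; simpa using h1)

lemma cross_AD {a b c d x0 y0 b' : ZMod (ℓ ^ m)} (hy0 : (ℓ : ZMod (ℓ ^ m)) ∣ y0)
    (h : span (ZMod (ℓ ^ m)) {![1, 0, a, b], ![0, 1, c, d]} =
      span (ZMod (ℓ ^ m)) {![x0, 1, 0, -y0], ![y0, 0, 1, b']}) : False := by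
  obtain ⟨s, u, hc⟩ := exists_coeffs (h ▸ mem_left ![1, 0, a, b] ![0, 1, c, d])
  have h0 := hc 0; have h1 := hc 1
  simp at h0 h1
  exact dvd_contra hℓ hm hy0 (by rw [h1] at h0; simpa using h0)

lemma cross_AE {a b c d x0 y0 y0' y2 : ZMod (ℓ ^ m)} (hy0' : (ℓ : ZMod (ℓ ^ m)) ∣ y0')
    (h : span (ZMod (ℓ ^ m)) {![1, 0, a, b], ![0, 1, c, d]} =
      span (ZMod (ℓ ^ m)) {![x0, 1, y0, 0], ![y0', 0, y2, 1]}) : False := by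
  obtain ⟨s, u, hc⟩ := exists_coeffs (h ▸ mem_left ![1, 0, a, b] ![0, 1, c, d])
  have h0 := hc 0; have h1 := hc 1
  simp at h0 h1
  exact dvd_contra hℓ hm hy0' (by rw [h1] at h0; simpa using h0)

lemma cross_BC {a b3 t a' x1 x2 : ZMod (ℓ ^ m)} (hx2 : (ℓ : ZMod (ℓ ^ m)) ∣ x2)
    (h : span (ZMod (ℓ ^ m)) {![1, a, 0, t], ![0, t, 1, b3]} =
      span (ZMod (ℓ ^ m)) {![1, a', -x1, 0], ![0, x1, x2, 1]}) : False := by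
  obtain ⟨s, u, hc⟩ := exists_coeffs (h ▸ mem_right ![1, a, 0, t] ![0, t, 1, b3])
  have h0 := hc 0; have h2 := hc 2
  simp at h0 h2
  rw [h0] at h2; simp at h2
  exact dvd_contra hℓ hm hx2 h2

lemma cross_BD {a b3 t x0 y0 b' : ZMod (ℓ ^ m)} (hx0 : (ℓ : ZMod (ℓ ^ m)) ∣ x0)
    (h : span (ZMod (ℓ ^ m)) {![1, a, 0, t], ![0, t, 1, b3]} =
      span (ZMod (ℓ ^ m)) {![x0, 1, 0, -y0], ![y0, 0, 1, b']}) : False := by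
  obtain ⟨s, u, hc⟩ := exists_coeffs (h ▸ mem_left ![1, a, 0, t] ![0, t, 1, b3])
  have h0 := hc 0; have h2 := hc 2
  simp at h0 h2
  rw [h2] at h0; simp at h0
  exact dvd_contra hℓ hm hx0 h0

lemma cross_BE {a b3 t x0 y0 y0' y2 : ZMod (ℓ ^ m)} (ht : (ℓ : ZMod (ℓ ^ m)) ∣ t)
    (hy2 : (ℓ : ZMod (ℓ ^ m)) ∣ y2)
    (h : span (ZMod (ℓ ^ m)) {![1, a, 0, t], ![0, t, 1, b3]} =
      span (ZMod (ℓ ^ m)) {![x0, 1, y0, 0], ![y0', 0, y2, 1]}) : False := by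
  obtain ⟨s, u, hc⟩ := exists_coeffs (h ▸ mem_right ![1, a, 0, t] ![0, t, 1, b3])
  have h1 := hc 1; have h2 := hc 2
  simp at h1 h2
  refine not_dvd_one hℓ hm (h2 ▸ dvd_add ?_ ((hy2.mul_left u)))
  exact Dvd.dvd.mul_right (h1 ▸ ht) y0

lemma cross_CD {a x1 x2 x0 y0 b' : ZMod (ℓ ^ m)} (hx1 : (ℓ : ZMod (ℓ ^ m)) ∣ x1)
    (hx0 : (ℓ : ZMod (ℓ ^ m)) ∣ x0)
    (h : span (ZMod (ℓ ^ m)) {![1, a, -x1, 0], ![0, x1, x2, 1]} =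
      span (ZMod (ℓ ^ m)) {![x0, 1, 0, -y0], ![y0, 0, 1, b']}) : False := by
  obtain ⟨s, u, hc⟩ := exists_coeffs (h ▸ mem_left ![1, a, -x1, 0] ![0, x1, x2, 1])
  have h0 := hc 0; have h2 := hc 2
  simp at h0 h2
  refine not_dvd_one hℓ hm (h0 ▸ dvd_add (hx0.mul_left s) ?_)
  exact Dvd.dvd.mul_right (h2 ▸ hx1.neg_right) y0

lemma cross_CE {a x1 x2 x0 y0 y0' y2 : ZMod (ℓ ^ m)} (hx0 : (ℓ : ZMod (ℓ ^ m)) ∣ x0)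
    (h : span (ZMod (ℓ ^ m)) {![1, a, -x1, 0], ![0, x1, x2, 1]} =
      span (ZMod (ℓ ^ m)) {![x0, 1, y0, 0], ![y0', 0, y2, 1]}) : False := by
  obtain ⟨s, u, hc⟩ := exists_coeffs (h ▸ mem_left ![1, a, -x1, 0] ![0, x1, x2, 1])
  have h0 := hc 0; have h3 := hc 3
  simp at h0 h3
  rw [h3] at h0; simp at h0
  exact dvd_contra hℓ hm hx0 h0

lemma cross_DE {x0 y0 b3 x0' y0' y0'' y2 : ZMod (ℓ ^ m)} (hy2 : (ℓ : ZMod (ℓ ^ m)) ∣ y2)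
    (h : span (ZMod (ℓ ^ m)) {![x0, 1, 0, -y0], ![y0, 0, 1, b3]} =
      span (ZMod (ℓ ^ m)) {![x0', 1, y0', 0], ![y0'', 0, y2, 1]}) : False := by
  obtain ⟨s, u, hc⟩ := exists_coeffs (h ▸ mem_right ![x0, 1, 0, -y0] ![y0, 0, 1, b3])
  have h1 := hc 1; have h2 := hc 2
  simp at h1 h2
  rw [h1] at h2; simp at h2
  exact dvd_contra hℓ hm hy2 h2

end Cross
lemma diag_A {a b c d a' b' c' d' : ZMod (ℓ ^ m)}
    (h : span (ZMod (ℓ ^ m)) {![1, 0, a, b], ![0, 1, c, d]} =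
      span (ZMod (ℓ ^ m)) {![1, 0, a', b'], ![0, 1, c', d']}) :
    a = a' ∧ b = b' ∧ c = c' ∧ d = d' := by
  obtain ⟨s, u, hc⟩ := exists_coeffs (h ▸ mem_left ![1, 0, a, b] ![0, 1, c, d])
  obtain ⟨s', u', hc'⟩ := exists_coeffs (h ▸ mem_right ![1, 0, a, b] ![0, 1, c, d])
  have h0 := hc 0; have h1 := hc 1; have h2 := hc 2; have h3 := hc 3
  have g0 := hc' 0; have g1 := hc' 1; have g2 := hc' 2; have g3 := hc' 3
  simp at h0 h1 h2 h3 g0 g1 g2 g3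
  subst h0 h1 g0 g1
  simp at h2 h3 g2 g3
  exact ⟨h2.symm, h3.symm, g2.symm, g3.symm⟩

lemma diag_B {a b3 t a' b3' t' : ZMod (ℓ ^ m)}
    (h : span (ZMod (ℓ ^ m)) {![1, a, 0, t], ![0, t, 1, b3]} =
      span (ZMod (ℓ ^ m)) {![1, a', 0, t'], ![0, t', 1, b3']}) :
    a = a' ∧ t = t' ∧ b3 = b3' := by
  obtain ⟨s, u, hc⟩ := exists_coeffs (h ▸ mem_left ![1, a, 0, t] ![0, t, 1, b3])
  obtain ⟨s', u', hc'⟩ := exists_coeffs (h ▸ mem_right ![1, a, 0, t] ![0, t, 1, b3])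
  have h0 := hc 0; have h2 := hc 2; have h1 := hc 1; have h3 := hc 3
  have g0 := hc' 0; have g2 := hc' 2; have g3 := hc' 3
  simp at h0 h1 h2 h3 g0 g2 g3
  subst h0 h2 g0 g2
  simp at h1 h3 g3
  exact ⟨h1.symm, h3.symm, g3.symm⟩

lemma diag_C {a x1 x2 a' x1' x2' : ZMod (ℓ ^ m)}
    (h : span (ZMod (ℓ ^ m)) {![1, a, -x1, 0], ![0, x1, x2, 1]} =
      span (ZMod (ℓ ^ m)) {![1, a', -x1', 0], ![0, x1', x2', 1]}) :
    a = a' ∧ x1 = x1' ∧ x2 = x2' := by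
  obtain ⟨s, u, hc⟩ := exists_coeffs (h ▸ mem_left ![1, a, -x1, 0] ![0, x1, x2, 1])
  obtain ⟨s', u', hc'⟩ := exists_coeffs (h ▸ mem_right ![1, a, -x1, 0] ![0, x1, x2, 1])
  have h0 := hc 0; have h3 := hc 3; have h1 := hc 1; have h2 := hc 2
  have g0 := hc' 0; have g3 := hc' 3; have g2 := hc' 2
  simp at h0 h1 h2 h3 g0 g2 g3
  subst h0 h3 g0 g3
  simp at h1 h2 g2
  exact ⟨h1.symm, h2.symm, g2.symm⟩

lemma diag_D {x0 y0 b3 x0' y0' b3' : ZMod (ℓ ^ m)}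
    (h : span (ZMod (ℓ ^ m)) {![x0, 1, 0, -y0], ![y0, 0, 1, b3]} =
      span (ZMod (ℓ ^ m)) {![x0', 1, 0, -y0'], ![y0', 0, 1, b3']}) :
    x0 = x0' ∧ y0 = y0' ∧ b3 = b3' := by
  obtain ⟨s, u, hc⟩ := exists_coeffs (h ▸ mem_left ![x0, 1, 0, -y0] ![y0, 0, 1, b3])
  obtain ⟨s', u', hc'⟩ := exists_coeffs (h ▸ mem_right ![x0, 1, 0, -y0] ![y0, 0, 1, b3])
  have h1 := hc 1; have h2 := hc 2; have h0 := hc 0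
  have g1 := hc' 1; have g2 := hc' 2; have g0 := hc' 0; have g3 := hc' 3
  simp at h0 h1 h2 g0 g1 g2 g3
  subst h1 h2 g1 g2
  simp at h0 g0 g3
  exact ⟨h0.symm, g0.symm, g3.symm⟩

lemma diag_E {x0 y0 y2 x0' y0' y2' : ZMod (ℓ ^ m)}
    (h : span (ZMod (ℓ ^ m)) {![x0, 1, y0, 0], ![y0, 0, y2, 1]} =
      span (ZMod (ℓ ^ m)) {![x0', 1, y0', 0], ![y0', 0, y2', 1]}) :
    x0 = x0' ∧ y0 = y0' ∧ y2 = y2' := by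
  obtain ⟨s, u, hc⟩ := exists_coeffs (h ▸ mem_left ![x0, 1, y0, 0] ![y0, 0, y2, 1])
  obtain ⟨s', u', hc'⟩ := exists_coeffs (h ▸ mem_right ![x0, 1, y0, 0] ![y0, 0, y2, 1])
  have h1 := hc 1; have h3 := hc 3; have h0 := hc 0; have h2 := hc 2
  have g1 := hc' 1; have g3 := hc' 3; have g0 := hc' 0; have g2 := hc' 2
  simp at h0 h1 h2 h3 g0 g1 g2 g3
  subst h1 h3 g1 g3
  simp at h0 h2 g0 g2
  exact ⟨h0.symm, h2.symm, g2.symm⟩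

set_option maxHeartbeats 2000000 in
lemma pred_to_range (hℓ : ℓ.Prime) (hm : 1 ≤ m)
    (H : Submodule (ZMod (ℓ ^ m)) (Fin 4 → ZMod (ℓ ^ m))) (hH : Pred ℓ m H) :
    ∃ p : Param ℓ m, Psi ℓ m p = H := by
  obtain ⟨hiso, ⟨e⟩⟩ := hH
  let ψ : (Fin 2 → ZMod (ℓ ^ m)) →ₗ[ZMod (ℓ ^ m)] (Fin 4 → ZMod (ℓ ^ m)) :=
    H.subtype ∘ₗ (e.symm : (Fin 2 → ZMod (ℓ ^ m)) ≃ₗ[ZMod (ℓ ^ m)] H).toLinearMap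
  have hψinj : Function.Injective ψ := by
    rw [show (ψ : (Fin 2 → ZMod (ℓ ^ m)) → (Fin 4 → ZMod (ℓ ^ m))) = H.subtype ∘ e.symm from rfl]
    exact H.injective_subtype.comp e.symm.injective
  set v : Fin 4 → ZMod (ℓ ^ m) := ψ (Pi.single 0 1) with hvdef
  set w : Fin 4 → ZMod (ℓ ^ m) := ψ (Pi.single 1 1) with hwdef
  have hsingle : ∀ f : Fin 2 → ZMod (ℓ ^ m),
      f = f 0 • (Pi.single 0 1 : Fin 2 → ZMod (ℓ ^ m)) + f 1 • (Pi.single 1 1 : Fin 2 → ZMod (ℓ ^ m)) := by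
    intro f; funext k; fin_cases k <;> simp
  have hψ : ∀ f : Fin 2 → ZMod (ℓ ^ m), ψ f = f 0 • v + f 1 • w := by
    intro f
    conv_lhs => rw [hsingle f]
    rw [map_add, map_smul, map_smul]
  have hspan : H = span (ZMod (ℓ ^ m)) {v, w} := by
    have h1 : LinearMap.range ψ = H := by
      rw [LinearMap.range_comp, LinearEquiv.range, Submodule.map_top, range_subtype]
    rw [← h1]
    apply le_antisymm
    · rintro x ⟨f, rfl⟩
      rw [hψ]
      exact add_mem (smul_mem _ _ (mem_left _ _)) (smul_mem _ _ (mem_right _ _))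
    · rw [span_le]; rintro x (rfl | rfl)
      · exact ⟨Pi.single 0 1, rfl⟩
      · exact ⟨Pi.single 1 1, rfl⟩
  have indep : ∀ α β : ZMod (ℓ ^ m),
      (∀ k, (ℓ : ZMod (ℓ ^ m)) ∣ (α * v k + β * w k)) →
      (ℓ : ZMod (ℓ ^ m)) ∣ α ∧ (ℓ : ZMod (ℓ ^ m)) ∣ β := by
    intro α β hab
    have h1 : ψ ((ℓ : ZMod (ℓ ^ m)) ^ (m - 1) • (α • (Pi.single 0 1 : Fin 2 → ZMod (ℓ ^ m)) + β • (Pi.single 1 1 : Fin 2 → ZMod (ℓ ^ m)))) = 0 := by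
      rw [map_smul, map_add, map_smul, map_smul]
      funext k
      have h2 : (ℓ : ZMod (ℓ ^ m)) ^ (m - 1) * (α * v k + β * w k) = 0 :=
        (pow_pred_mul_eq_zero_iff hℓ hm _).mpr (hab k)
      simpa [Pi.smul_apply, Pi.add_apply, smul_eq_mul] using h2
    have h3 := hψinj (h1.trans (map_zero ψ).symm)
    have h4 := congrFun h3 0
    have h5 := congrFun h3 1
    simp [Pi.smul_apply, Pi.add_apply, smul_eq_mul] at h4 h5
    exact ⟨(pow_pred_mul_eq_zero_iff hℓ hm α).mp h4,
      (pow_pred_mul_eq_zero_iff hℓ hm β).mp h5⟩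
  have hvH : v ∈ H := by rw [hspan]; exact mem_left _ _
  have hwH : w ∈ H := by rw [hspan]; exact mem_right _ _
  have hω := hiso v hvH w hwH
  by_cases h01 : (ℓ : ZMod (ℓ ^ m)) ∣ (v 0 * w 1 - v 1 * w 0)
  case neg =>
    obtain ⟨uu, huu⟩ := isUnit_of_not_dvd hℓ hm h01
    have hr : (↑uu⁻¹ : ZMod (ℓ ^ m)) * (v 0 * w 1 - v 1 * w 0) = 1 := by
      rw [← huu]; exact Units.inv_mul uu
    set r : ZMod (ℓ ^ m) := ↑uu⁻¹
    have hsp := pivot_span v w 0 1 r hr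
    set v' : Fin 4 → ZMod (ℓ ^ m) := fun k => r * (w 1 * v k - v 1 * w k) with hv'
    set w' : Fin 4 → ZMod (ℓ ^ m) := fun k => r * (v 0 * w k - w 0 * v k) with hw'
    have pv0 : v' 0 = 1 := by simp only [hv']; linear_combination hr
    have pv1 : v' 1 = 0 := by simp only [hv']; ring
    have pw0 : w' 0 = 0 := by simp only [hw']; ring
    have pw1 : w' 1 = 1 := by simp only [hw']; linear_combination hr
    have hHsp : H = span (ZMod (ℓ ^ m)) {v', w'} := hspan.trans hsp
    have hω' := hiso v' (by rw [hHsp]; exact mem_left _ _) w' (by rw [hHsp]; exact mem_right _ _)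
    rw [pv0, pv1, pw0, pw1] at hω'
    have hcon : v' 2 * w' 3 - v' 3 * w' 2 = -1 := by linear_combination hω'
    refine ⟨.inl ⟨(v' 2, v' 3, w' 2, w' 3), hcon⟩, ?_⟩
    show span (ZMod (ℓ ^ m)) {![1, 0, v' 2, v' 3], ![0, 1, w' 2, w' 3]} = H
    have e1 : ![1, 0, v' 2, v' 3] = v' := by
      funext k; fin_cases k <;> simp [pv0, pv1]
    have e2 : ![0, 1, w' 2, w' 3] = w' := by
      funext k; fin_cases k <;> simp [pw0, pw1]
    rw [e1, e2, hHsp]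
  case pos =>
  by_cases h02 : (ℓ : ZMod (ℓ ^ m)) ∣ (v 0 * w 2 - v 2 * w 0)
  case neg =>
    obtain ⟨uu, huu⟩ := isUnit_of_not_dvd hℓ hm h02
    have hr : (↑uu⁻¹ : ZMod (ℓ ^ m)) * (v 0 * w 2 - v 2 * w 0) = 1 := by
      rw [← huu]; exact Units.inv_mul uu
    set r : ZMod (ℓ ^ m) := ↑uu⁻¹
    have hsp := pivot_span v w 0 2 r hr
    set v' : Fin 4 → ZMod (ℓ ^ m) := fun k => r * (w 2 * v k - v 2 * w k) with hv'
    set w' : Fin 4 → ZMod (ℓ ^ m) := fun k => r * (v 0 * w k - w 0 * v k) with hw'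
    have pv0 : v' 0 = 1 := by simp only [hv']; linear_combination hr
    have pv2 : v' 2 = 0 := by simp only [hv']; ring
    have pw0 : w' 0 = 0 := by simp only [hw']; ring
    have pw2 : w' 2 = 1 := by simp only [hw']; linear_combination hr
    have hdw1 : (ℓ : ZMod (ℓ ^ m)) ∣ w' 1 := by
      have he : w' 1 = r * (v 0 * w 1 - v 1 * w 0) := by simp only [hw']; ring
      rw [he]; exact h01.mul_left r
    have hHsp : H = span (ZMod (ℓ ^ m)) {v', w'} := hspan.trans hsp
    have hω' := hiso v' (by rw [hHsp]; exact mem_left _ _) w' (by rw [hHsp]; exact mem_right _ _)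
    rw [pv0, pv2, pw0, pw2] at hω'
    have hv3 : v' 3 = w' 1 := by linear_combination -hω'
    refine ⟨.inr (.inl (v' 1, w' 3, ⟨w' 1, hdw1⟩)), ?_⟩
    show span (ZMod (ℓ ^ m)) {![1, v' 1, 0, w' 1], ![0, w' 1, 1, w' 3]} = H
    have e1 : ![1, v' 1, 0, w' 1] = v' := by
      funext k; fin_cases k <;> simp [pv0, pv2, hv3]
    have e2 : ![0, w' 1, 1, w' 3] = w' := by
      funext k; fin_cases k <;> simp [pw0, pw2]
    rw [e1, e2, hHsp]
  case pos =>
  by_cases h03 : (ℓ : ZMod (ℓ ^ m)) ∣ (v 0 * w 3 - v 3 * w 0)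
  case neg =>
    obtain ⟨uu, huu⟩ := isUnit_of_not_dvd hℓ hm h03
    have hr : (↑uu⁻¹ : ZMod (ℓ ^ m)) * (v 0 * w 3 - v 3 * w 0) = 1 := by
      rw [← huu]; exact Units.inv_mul uu
    set r : ZMod (ℓ ^ m) := ↑uu⁻¹
    have hsp := pivot_span v w 0 3 r hr
    set v' : Fin 4 → ZMod (ℓ ^ m) := fun k => r * (w 3 * v k - v 3 * w k) with hv'
    set w' : Fin 4 → ZMod (ℓ ^ m) := fun k => r * (v 0 * w k - w 0 * v k) with hw'
    have pv0 : v' 0 = 1 := by simp only [hv']; linear_combination hr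
    have pv3 : v' 3 = 0 := by simp only [hv']; ring
    have pw0 : w' 0 = 0 := by simp only [hw']; ring
    have pw3 : w' 3 = 1 := by simp only [hw']; linear_combination hr
    have hdw1 : (ℓ : ZMod (ℓ ^ m)) ∣ w' 1 := by
      have he : w' 1 = r * (v 0 * w 1 - v 1 * w 0) := by simp only [hw']; ring
      rw [he]; exact h01.mul_left r
    have hdw2 : (ℓ : ZMod (ℓ ^ m)) ∣ w' 2 := by
      have he : w' 2 = r * (v 0 * w 2 - v 2 * w 0) := by simp only [hw']; ring
      rw [he]; exact h02.mul_left r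
    have hHsp : H = span (ZMod (ℓ ^ m)) {v', w'} := hspan.trans hsp
    have hω' := hiso v' (by rw [hHsp]; exact mem_left _ _) w' (by rw [hHsp]; exact mem_right _ _)
    rw [pv0, pv3, pw0, pw3] at hω'
    have hv2 : v' 2 = -(w' 1) := by linear_combination hω'
    refine ⟨.inr (.inr (.inl (v' 1, ⟨w' 1, hdw1⟩, ⟨w' 2, hdw2⟩))), ?_⟩
    show span (ZMod (ℓ ^ m)) {![1, v' 1, -(w' 1), 0], ![0, w' 1, w' 2, 1]} = H
    have e1 : ![1, v' 1, -(w' 1), 0] = v' := by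
      funext k; fin_cases k <;> simp [pv0, pv3, hv2]
    have e2 : ![0, w' 1, w' 2, 1] = w' := by
      funext k; fin_cases k <;> simp [pw0, pw3]
    rw [e1, e2, hHsp]
  case pos =>
  by_cases h12 : (ℓ : ZMod (ℓ ^ m)) ∣ (v 1 * w 2 - v 2 * w 1)
  case neg =>
    obtain ⟨uu, huu⟩ := isUnit_of_not_dvd hℓ hm h12
    have hr : (↑uu⁻¹ : ZMod (ℓ ^ m)) * (v 1 * w 2 - v 2 * w 1) = 1 := by
      rw [← huu]; exact Units.inv_mul uu
    set r : ZMod (ℓ ^ m) := ↑uu⁻¹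
    have hsp := pivot_span v w 1 2 r hr
    set v' : Fin 4 → ZMod (ℓ ^ m) := fun k => r * (w 2 * v k - v 2 * w k) with hv'
    set w' : Fin 4 → ZMod (ℓ ^ m) := fun k => r * (v 1 * w k - w 1 * v k) with hw'
    have pv1 : v' 1 = 1 := by simp only [hv']; linear_combination hr
    have pv2 : v' 2 = 0 := by simp only [hv']; ring
    have pw1 : w' 1 = 0 := by simp only [hw']; ring
    have pw2 : w' 2 = 1 := by simp only [hw']; linear_combination hr
    have hdv0 : (ℓ : ZMod (ℓ ^ m)) ∣ v' 0 := by
      have he : v' 0 = r * (v 0 * w 2 - v 2 * w 0) := by simp only [hv']; ring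
      rw [he]; exact h02.mul_left r
    have hdw0 : (ℓ : ZMod (ℓ ^ m)) ∣ w' 0 := by
      have he : w' 0 = -(r * (v 0 * w 1 - v 1 * w 0)) := by simp only [hw']; ring
      rw [he]; exact dvd_neg.mpr (h01.mul_left r)
    have hHsp : H = span (ZMod (ℓ ^ m)) {v', w'} := hspan.trans hsp
    have hω' := hiso v' (by rw [hHsp]; exact mem_left _ _) w' (by rw [hHsp]; exact mem_right _ _)
    rw [pv1, pv2, pw1, pw2] at hω'
    have hv3 : v' 3 = -(w' 0) := by linear_combination -hω'
    refine ⟨.inr (.inr (.inr (.inl (⟨v' 0, hdv0⟩, ⟨w' 0, hdw0⟩, w' 3)))), ?_⟩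
    show span (ZMod (ℓ ^ m)) {![v' 0, 1, 0, -(w' 0)], ![w' 0, 0, 1, w' 3]} = H
    have e1 : ![v' 0, 1, 0, -(w' 0)] = v' := by
      funext k; fin_cases k <;> simp [pv1, pv2, hv3]
    have e2 : ![w' 0, 0, 1, w' 3] = w' := by
      funext k; fin_cases k <;> simp [pw1, pw2]
    rw [e1, e2, hHsp]
  case pos =>
  by_cases h13 : (ℓ : ZMod (ℓ ^ m)) ∣ (v 1 * w 3 - v 3 * w 1)
  case neg =>
    obtain ⟨uu, huu⟩ := isUnit_of_not_dvd hℓ hm h13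
    have hr : (↑uu⁻¹ : ZMod (ℓ ^ m)) * (v 1 * w 3 - v 3 * w 1) = 1 := by
      rw [← huu]; exact Units.inv_mul uu
    set r : ZMod (ℓ ^ m) := ↑uu⁻¹
    have hsp := pivot_span v w 1 3 r hr
    set v' : Fin 4 → ZMod (ℓ ^ m) := fun k => r * (w 3 * v k - v 3 * w k) with hv'
    set w' : Fin 4 → ZMod (ℓ ^ m) := fun k => r * (v 1 * w k - w 1 * v k) with hw'
    have pv1 : v' 1 = 1 := by simp only [hv']; linear_combination hr
    have pv3 : v' 3 = 0 := by simp only [hv']; ring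
    have pw1 : w' 1 = 0 := by simp only [hw']; ring
    have pw3 : w' 3 = 1 := by simp only [hw']; linear_combination hr
    have hdv0 : (ℓ : ZMod (ℓ ^ m)) ∣ v' 0 := by
      have he : v' 0 = r * (v 0 * w 3 - v 3 * w 0) := by simp only [hv']; ring
      rw [he]; exact h03.mul_left r
    have hdw0 : (ℓ : ZMod (ℓ ^ m)) ∣ w' 0 := by
      have he : w' 0 = -(r * (v 0 * w 1 - v 1 * w 0)) := by simp only [hw']; ring
      rw [he]; exact dvd_neg.mpr (h01.mul_left r)
    have hdw2 : (ℓ : ZMod (ℓ ^ m)) ∣ w' 2 := by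
      have he : w' 2 = r * (v 1 * w 2 - v 2 * w 1) := by simp only [hw']; ring
      rw [he]; exact h12.mul_left r
    have hHsp : H = span (ZMod (ℓ ^ m)) {v', w'} := hspan.trans hsp
    have hω' := hiso v' (by rw [hHsp]; exact mem_left _ _) w' (by rw [hHsp]; exact mem_right _ _)
    rw [pv1, pv3, pw1, pw3] at hω'
    have hv2 : v' 2 = w' 0 := by linear_combination hω'
    refine ⟨.inr (.inr (.inr (.inr (⟨v' 0, hdv0⟩, ⟨w' 0, hdw0⟩, ⟨w' 2, hdw2⟩)))), ?_⟩
    show span (ZMod (ℓ ^ m)) {![v' 0, 1, w' 0, 0], ![w' 0, 0, w' 2, 1]} = H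
    have e1 : ![v' 0, 1, w' 0, 0] = v' := by
      funext k; fin_cases k <;> simp [pv1, pv3, hv2]
    have e2 : ![w' 0, 0, w' 2, 1] = w' := by
      funext k; fin_cases k <;> simp [pw1, pw3]
    rw [e1, e2, hHsp]
  case pos =>
    exfalso
    have h23 : (ℓ : ZMod (ℓ ^ m)) ∣ (v 2 * w 3 - v 3 * w 2) := by
      have he : v 2 * w 3 - v 3 * w 2 = -(v 0 * w 1 - v 1 * w 0) := by linear_combination hω
      rw [he]; exact dvd_neg.mpr h01
    have hall : ∀ k l : Fin 4, (ℓ : ZMod (ℓ ^ m)) ∣ (v k * w l - v l * w k) := by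
      intro k l
      fin_cases k <;> fin_cases l <;>
        first
          | (simp only [sub_self]; exact dvd_zero _)
          | exact h01 | exact h02 | exact h03 | exact h12 | exact h13 | exact h23
          | exact dvd_sub_comm.mp h01 | exact dvd_sub_comm.mp h02
          | exact dvd_sub_comm.mp h03 | exact dvd_sub_comm.mp h12
          | exact dvd_sub_comm.mp h13 | exact dvd_sub_comm.mp h23
    have hexists : ∃ k0, ¬ (ℓ : ZMod (ℓ ^ m)) ∣ v k0 := by
      by_contra hno
      push_neg at hno
      refine not_dvd_one hℓ hm (indep 1 0 (fun k => ?_)).1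
      simpa using hno k
    obtain ⟨k0, hk0⟩ := hexists
    have hfin := (indep (w k0) (-(v k0)) (fun k => by
      have he : w k0 * v k + (-(v k0)) * w k = -(v k0 * w k - v k * w k0) := by ring
      rw [he]; exact dvd_neg.mpr (hall k0 k))).2
    exact hk0 (dvd_neg.mp hfin)

def Unimod (ℓ m : ℕ) : Type :=
  {p : ZMod (ℓ ^ m) × ZMod (ℓ ^ m) //
    ¬((ℓ : ZMod (ℓ ^ m)) ∣ p.1 ∧ (ℓ : ZMod (ℓ ^ m)) ∣ p.2)}

lemma unimod_of (hℓ : ℓ.Prime) (hm : 1 ≤ m) {a b c d : ZMod (ℓ ^ m)}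
    (h : a * d - b * c = -1) :
    ¬((ℓ : ZMod (ℓ ^ m)) ∣ a ∧ (ℓ : ZMod (ℓ ^ m)) ∣ b) := by
  rintro ⟨ha, hb⟩
  refine not_dvd_one hℓ hm (dvd_neg.mp ?_)
  rw [← h]
  exact dvd_sub (ha.mul_right d) (hb.mul_right c)

lemma isUnit_b (hℓ : ℓ.Prime) (hm : 1 ≤ m) {a b : ZMod (ℓ ^ m)}
    (hu : ¬((ℓ : ZMod (ℓ ^ m)) ∣ a ∧ (ℓ : ZMod (ℓ ^ m)) ∣ b)) (hna : ¬ IsUnit a) :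
    IsUnit b := by
  have ha : (ℓ : ZMod (ℓ ^ m)) ∣ a := by
    by_contra hc; exact hna (isUnit_of_not_dvd hℓ hm hc)
  exact isUnit_of_not_dvd hℓ hm (fun hb => hu ⟨ha, hb⟩)

open scoped Classical in
noncomputable def p01Equiv (hℓ : ℓ.Prime) (hm : 1 ≤ m) :
    P01 ℓ m ≃ Unimod ℓ m × ZMod (ℓ ^ m) where
  toFun p := (⟨(p.1.1, p.1.2.1), unimod_of hℓ hm p.2⟩,
    if IsUnit p.1.1 then Ring.inverse p.1.1 * p.1.2.2.1 else Ring.inverse p.1.2.1 * p.1.2.2.2)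
  invFun q := ⟨(q.1.1.1, q.1.1.2,
      (if IsUnit q.1.1.1 then 0 else Ring.inverse q.1.1.2) + q.2 * q.1.1.1,
      (if IsUnit q.1.1.1 then -Ring.inverse q.1.1.1 else 0) + q.2 * q.1.1.2), by
    obtain ⟨⟨⟨a, b⟩, hu⟩, t⟩ := q
    by_cases h : IsUnit a
    · simp only [h, if_true]
      linear_combination (-1 : ZMod (ℓ ^ m)) * Ring.mul_inverse_cancel a h
    · simp only [h, if_false]
      linear_combination (-1 : ZMod (ℓ ^ m)) * Ring.mul_inverse_cancel b (isUnit_b hℓ hm hu h)⟩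
  left_inv := by
    rintro ⟨⟨a, b, c, d⟩, hp⟩
    apply Subtype.ext
    by_cases h : IsUnit a
    · simp only [h, if_true]
      refine Prod.ext rfl (Prod.ext rfl (Prod.ext ?_ ?_)) <;> simp only []
      · linear_combination c * Ring.inverse_mul_cancel a h
      · linear_combination (-(Ring.inverse a)) * hp + d * Ring.inverse_mul_cancel a h
    · have hb := isUnit_b hℓ hm (unimod_of hℓ hm hp) h
      simp only [h, if_false]
      refine Prod.ext rfl (Prod.ext rfl (Prod.ext ?_ ?_)) <;> simp only []
      · linear_combination (Ring.inverse b) * hp + c * Ring.inverse_mul_cancel b hb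
      · linear_combination d * Ring.inverse_mul_cancel b hb
  right_inv := by
    rintro ⟨⟨⟨a, b⟩, hu⟩, t⟩
    by_cases h : IsUnit a
    · simp only [h, if_true]
      refine Prod.ext (Subtype.ext rfl) ?_
      simp only [h, if_true]
      linear_combination t * Ring.inverse_mul_cancel a h
    · have hb := isUnit_b hℓ hm hu h
      simp only [h, if_false]
      refine Prod.ext (Subtype.ext rfl) ?_
      simp only [h, if_false]
      linear_combination t * Ring.inverse_mul_cancel b hb

lemma card_Unimod (hℓ : ℓ.Prime) (hm : 1 ≤ m) :
    Nat.card (Unimod ℓ m) = ℓ ^ m * ℓ ^ m - ℓ ^ (m - 1) * ℓ ^ (m - 1) := by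
  classical
  haveI := neZero_pow (m := m) hℓ
  set P : ZMod (ℓ ^ m) × ZMod (ℓ ^ m) → Prop :=
    fun p => (ℓ : ZMod (ℓ ^ m)) ∣ p.1 ∧ (ℓ : ZMod (ℓ ^ m)) ∣ p.2 with hP
  have e1 : {p // P p} ⊕ {p // ¬ P p} ≃ (ZMod (ℓ ^ m) × ZMod (ℓ ^ m)) := Equiv.sumCompl P
  have h1 : Nat.card {p // P p} + Nat.card {p // ¬ P p} = ℓ ^ m * ℓ ^ m := by
    rw [← Nat.card_sum, Nat.card_congr e1, Nat.card_prod, Nat.card_zmod]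
  have h2 : Nat.card {p // P p} = ℓ ^ (m - 1) * ℓ ^ (m - 1) := by
    rw [Nat.card_congr (Equiv.subtypeProdEquivProd (p := fun x => (ℓ : ZMod (ℓ ^ m)) ∣ x)
      (q := fun x => (ℓ : ZMod (ℓ ^ m)) ∣ x)), Nat.card_prod]
    rw [show Nat.card {x : ZMod (ℓ ^ m) // (ℓ : ZMod (ℓ ^ m)) ∣ x} = ℓ ^ (m-1) from card_Ell hℓ hm]
  have : Nat.card (Unimod ℓ m) = Nat.card {p // ¬ P p} := rfl
  omega

lemma card_P01 (hℓ : ℓ.Prime) (hm : 1 ≤ m) :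
    Nat.card (P01 ℓ m) = (ℓ ^ m * ℓ ^ m - ℓ ^ (m - 1) * ℓ ^ (m - 1)) * ℓ ^ m := by
  rw [Nat.card_congr (p01Equiv hℓ hm), Nat.card_prod, card_Unimod hℓ hm, Nat.card_zmod]


lemma psi_injective (hℓ : ℓ.Prime) (hm : 1 ≤ m) : Function.Injective (Psi ℓ m) := by
  rintro (⟨⟨a,b,c,d⟩,hp⟩ | ⟨a,b3,⟨t,ht⟩⟩ | ⟨a,⟨x1,hx1⟩,⟨x2,hx2⟩⟩ | ⟨⟨x0,hx0⟩,⟨y0,hy0⟩,b3⟩ |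
      ⟨⟨x0,hx0⟩,⟨y0,hy0⟩,⟨y2,hy2⟩⟩)
    (⟨⟨a',b',c',d'⟩,hp'⟩ | ⟨a',b3',⟨t',ht'⟩⟩ | ⟨a',⟨x1',hx1'⟩,⟨x2',hx2'⟩⟩ |
      ⟨⟨x0',hx0'⟩,⟨y0',hy0'⟩,b3'⟩ | ⟨⟨x0',hx0'⟩,⟨y0',hy0'⟩,⟨y2',hy2'⟩⟩) h
  all_goals simp only [Psi] at h
  -- row A
  · obtain ⟨e1, e2, e3, e4⟩ := diag_A h
    subst e1; subst e2; subst e3; subst e4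
    rfl
  · exact (cross_AB hℓ hm ht' h).elim
  · exact (cross_AC hℓ hm hx1' h).elim
  · exact (cross_AD hℓ hm hy0' h).elim
  · exact (cross_AE hℓ hm hy0' h).elim
  -- row B
  · exact (cross_AB hℓ hm ht h.symm).elim
  · obtain ⟨e1, e2, e3⟩ := diag_B h
    subst e1; subst e3
    rw [show (⟨t, ht⟩ : Ell ℓ m) = ⟨t', ht'⟩ from Subtype.ext e2]
  · exact (cross_BC hℓ hm hx2' h).elim
  · exact (cross_BD hℓ hm hx0' h).elim
  · exact (cross_BE hℓ hm ht hy2' h).elim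
  -- row C
  · exact (cross_AC hℓ hm hx1 h.symm).elim
  · exact (cross_BC hℓ hm hx2 h.symm).elim
  · obtain ⟨e1, e2, e3⟩ := diag_C h
    subst e1
    rw [show (⟨x1, hx1⟩ : Ell ℓ m) = ⟨x1', hx1'⟩ from Subtype.ext e2,
        show (⟨x2, hx2⟩ : Ell ℓ m) = ⟨x2', hx2'⟩ from Subtype.ext e3]
  · exact (cross_CD hℓ hm hx1 hx0' h).elim
  · exact (cross_CE hℓ hm hx0' h).elim
  -- row D
  · exact (cross_AD hℓ hm hy0 h.symm).elim
  · exact (cross_BD hℓ hm hx0 h.symm).elim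
  · exact (cross_CD hℓ hm hx1' hx0 h.symm).elim
  · obtain ⟨e1, e2, e3⟩ := diag_D h
    subst e3
    rw [show (⟨x0, hx0⟩ : Ell ℓ m) = ⟨x0', hx0'⟩ from Subtype.ext e1,
        show (⟨y0, hy0⟩ : Ell ℓ m) = ⟨y0', hy0'⟩ from Subtype.ext e2]
  · exact (cross_DE hℓ hm hy2' h).elim
  -- row E
  · exact (cross_AE hℓ hm hy0 h.symm).elim
  · exact (cross_BE hℓ hm ht' hy2 h.symm).elim
  · exact (cross_CE hℓ hm hx0 h.symm).elim
  · exact (cross_DE hℓ hm hy2 h.symm).elim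
  · obtain ⟨e1, e2, e3⟩ := diag_E h
    rw [show (⟨x0, hx0⟩ : Ell ℓ m) = ⟨x0', hx0'⟩ from Subtype.ext e1,
        show (⟨y0, hy0⟩ : Ell ℓ m) = ⟨y0', hy0'⟩ from Subtype.ext e2,
        show (⟨y2, hy2⟩ : Ell ℓ m) = ⟨y2', hy2'⟩ from Subtype.ext e3]

end Stmt0Aux

open Stmt0Aux in
/-- The number of isotropic submodules of `(ZMod ℓ^m)⁴` (with respect to the standard
symplectic form `ω(x,y) = x₁y₂ − x₂y₁ + x₃y₄ − x₄y₃`) that are isomorphic as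
`ZMod ℓ^m`-modules to `(ZMod ℓ^m)²` is exactly
`ℓ^{3m} + ℓ^{3m−1} + ℓ^{3m−2} + ℓ^{3m−3}`. -/
theorem stmt_0 (ℓ m : ℕ) (hℓ : ℓ.Prime) (hm : 1 ≤ m) :
    Nat.card {H : Submodule (ZMod (ℓ ^ m)) (Fin 4 → ZMod (ℓ ^ m)) //
        (∀ x ∈ H, ∀ y ∈ H,
          x 0 * y 1 - x 1 * y 0 + x 2 * y 3 - x 3 * y 2 = (0 : ZMod (ℓ ^ m))) ∧
        Nonempty (H ≃ₗ[ZMod (ℓ ^ m)] (Fin 2 → ZMod (ℓ ^ m)))} =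
      ℓ ^ (3 * m) + ℓ ^ (3 * m - 1) + ℓ ^ (3 * m - 2) + ℓ ^ (3 * m - 3) := by
  classical
  haveI := neZero_pow (m := m) hℓ
  have hinj := psi_injective hℓ hm
  have hiff : ∀ H : Submodule (ZMod (ℓ ^ m)) (Fin 4 → ZMod (ℓ ^ m)),
      ((∀ x ∈ H, ∀ y ∈ H,
          x 0 * y 1 - x 1 * y 0 + x 2 * y 3 - x 3 * y 2 = (0 : ZMod (ℓ ^ m))) ∧
        Nonempty (H ≃ₗ[ZMod (ℓ ^ m)] (Fin 2 → ZMod (ℓ ^ m)))) ↔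
        H ∈ Set.range (Psi ℓ m) := by
    intro H
    constructor
    · intro h
      obtain ⟨p, hp⟩ := pred_to_range hℓ hm H h
      exact ⟨p, hp⟩
    · rintro ⟨p, rfl⟩
      exact pred_psi ℓ m p
  rw [Nat.card_congr ((Equiv.subtypeEquivRight hiff).trans (Equiv.ofInjective _ hinj).symm)]
  haveI : Finite (ZMod (ℓ ^ m)) := inferInstance
  haveI : Finite (Ell ℓ m) := by unfold Stmt0Aux.Ell; infer_instance
  haveI : Finite (P01 ℓ m) := by unfold Stmt0Aux.P01; infer_instance
  show Nat.card (P01 ℓ m ⊕ (ZMod (ℓ ^ m) × ZMod (ℓ ^ m) × Ell ℓ m) ⊕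
    (ZMod (ℓ ^ m) × Ell ℓ m × Ell ℓ m) ⊕ (Ell ℓ m × Ell ℓ m × ZMod (ℓ ^ m)) ⊕
    (Ell ℓ m × Ell ℓ m × Ell ℓ m)) = _
  rw [Nat.card_sum, Nat.card_sum, Nat.card_sum, Nat.card_sum,
      card_P01 hℓ hm, Nat.card_prod, Nat.card_prod, Nat.card_prod, Nat.card_prod,
      Nat.card_prod, Nat.card_prod, Nat.card_prod, Nat.card_prod,
      card_Ell hℓ hm, Nat.card_zmod]
  obtain ⟨t, rfl⟩ : ∃ t, m = t + 1 := ⟨m - 1, by omega⟩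
  have d1 : t + 1 - 1 = t := by omega
  have d2 : 3 * (t + 1) = 3 * t + 3 := by omega
  have d3 : 3 * (t + 1) - 1 = 3 * t + 2 := by omega
  have d4 : 3 * (t + 1) - 2 = 3 * t + 1 := by omega
  have d5 : 3 * (t + 1) - 3 = 3 * t := by omega
  rw [d1, d3, d4, d5, d2, Nat.sub_mul]
  have q1 : ℓ ^ (t+1) * ℓ ^ (t+1) * ℓ ^ (t+1) = ℓ ^ (3*t+3) := by
    rw [← pow_add, ← pow_add]; congr 1; omega
  have q2 : ℓ ^ t * ℓ ^ t * ℓ ^ (t+1) = ℓ ^ (3*t+1) := by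
    rw [← pow_add, ← pow_add]; congr 1; omega
  have q3 : ℓ ^ (t+1) * (ℓ ^ (t+1) * ℓ ^ t) = ℓ ^ (3*t+2) := by
    rw [← pow_add, ← pow_add]; congr 1; omega
  have q4 : ℓ ^ (t+1) * (ℓ ^ t * ℓ ^ t) = ℓ ^ (3*t+1) := by
    rw [← pow_add, ← pow_add]; congr 1; omega
  have q5 : ℓ ^ t * (ℓ ^ t * ℓ ^ (t+1)) = ℓ ^ (3*t+1) := by
    rw [← pow_add, ← pow_add]; congr 1; omega
  have q6 : ℓ ^ t * (ℓ ^ t * ℓ ^ t) = ℓ ^ (3*t) := by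
    rw [← pow_add, ← pow_add]; congr 1; omega
  rw [q1, q2, q3, q4, q5, q6]
  have hle : ℓ ^ (3*t+1) ≤ ℓ ^ (3*t+3) :=
    Nat.pow_le_pow_right hℓ.pos (by omega)
  omega
end

section
/- The number of cyclic subgroups of order exactly ℓ^m of the group (ZMod ℓ^m)⁴ is exactly ℓ^{3m} + ℓ^{3m−1} + ℓ^{3m−2} + ℓ^{3m−3}. -/
/-!
A cyclic subgroup of order `ℓ^m` has `φ(ℓ^m) = ℓ^(m-1)(ℓ-1)` generators, so the number of such
subgroups is the number of elements of order `ℓ^m` divided by `φ(ℓ^m)`. Since `(ZMod ℓ^m)⁴` has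
exponent `ℓ^m`, an element has smaller order exactly when `ℓ^(m-1)` kills it, and there are
`(ℓ^(m-1))⁴` such elements; so `ℓ^(4m) - ℓ^(4m-4)` elements have order `ℓ^m`.
-/

open Finset

lemma Nat.card_eq_card_mul_of_card_fiber {α β : Type*} [Finite α] [Finite β] (f : α → β)
    {c : ℕ} (hf : ∀ b, Nat.card {a // f a = b} = c) : Nat.card α = Nat.card β * c := by
  have := Fintype.ofFinite β
  rw [Nat.card_congr (Equiv.sigmaFiberEquiv f).symm, Nat.card_sigma, Finset.sum_congr rfl
    fun b _ => hf b, Finset.sum_const, Finset.card_univ, smul_eq_mul, Nat.card_eq_fintype_card]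

lemma addOrderOf_eq_prime_pow_succ_iff {G : Type*} [AddMonoid G] {p k : ℕ} [hp : Fact p.Prime]
    {x : G} (hx : p ^ (k + 1) • x = 0) : addOrderOf x = p ^ (k + 1) ↔ ¬p ^ k • x = 0 := by
  refine ⟨fun h hk => ?_, fun h => addOrderOf_eq_prime_pow h hx⟩
  have := Nat.le_of_dvd (pow_pos hp.out.pos k) (h ▸ addOrderOf_dvd_of_nsmul_eq_zero hk)
  exact this.not_gt (Nat.pow_lt_pow_right hp.out.one_lt k.lt_succ_self)

lemma Nat.card_subtype_add_card_subtype_not {α : Type*} [Finite α] (P : α → Prop) :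
    Nat.card {a // P a} + Nat.card {a // ¬P a} = Nat.card α := by
  classical
  rw [← Nat.card_sum, Nat.card_congr (Equiv.sumCompl P)]

lemma IsAddCyclic.card_nsmul_eq_zero {α : Type*} [AddGroup α] [Fintype α] [DecidableEq α]
    [IsAddCyclic α] {d : ℕ} (hd : d ∣ Fintype.card α) : #{a : α | d • a = 0} = d := by
  have hd0 : d ≠ 0 := (Nat.pos_of_dvd_of_pos hd Fintype.card_pos).ne'
  rw [← sum_card_addOrderOf_eq_card_nsmul_eq_zero hd0]
  conv_rhs => rw [← Nat.sum_totient d]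
  exact Finset.sum_congr rfl fun e he =>
    IsAddCyclic.card_addOrderOf_eq_totient ((Nat.dvd_of_mem_divisors he).trans hd)

lemma ZMod.card_nsmul_eq_zero {n d : ℕ} [NeZero n] (hd : d ∣ n) :
    Nat.card {a : ZMod n // d • a = 0} = d := by
  classical
  rw [Nat.card_eq_fintype_card, Fintype.card_subtype]
  exact IsAddCyclic.card_nsmul_eq_zero (by rwa [ZMod.card])

lemma Pi.card_nsmul_eq_zero {ι A : Type*} [Fintype ι] [AddMonoid A] (d : ℕ) :
    Nat.card {x : ι → A // d • x = 0} = Nat.card {a : A // d • a = 0} ^ Fintype.card ι := by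
  simp only [funext_iff, Pi.smul_apply, Pi.zero_apply]
  rw [Nat.card_congr (Equiv.subtypePiEquivPi (p := fun _ a => d • a = 0)), Nat.card_pi,
    Finset.prod_const, Finset.card_univ]

section Generators

variable {G : Type*} [AddGroup G] [Finite G]

lemma card_generators_zmultiples (x : G) :
    Nat.card {y : G // AddSubgroup.zmultiples y = AddSubgroup.zmultiples x} =
      Nat.totient (addOrderOf x) := by
  classical
  have := Fintype.ofFinite (AddSubgroup.zmultiples x)
  let e : {y : G // AddSubgroup.zmultiples y = AddSubgroup.zmultiples x} ≃
      {z : AddSubgroup.zmultiples x // addOrderOf z = addOrderOf x} :=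
    { toFun := fun y => ⟨⟨y, AddSubgroup.zmultiples_le.mp y.2.le⟩, by
        rw [AddSubgroup.addOrderOf_mk, ← Nat.card_zmultiples, y.2, Nat.card_zmultiples]⟩
      invFun := fun z => ⟨z, AddSubgroup.eq_of_le_of_card_ge
          (AddSubgroup.zmultiples_le.mpr z.1.2) (by
            rw [Nat.card_zmultiples, Nat.card_zmultiples, AddSubgroup.addOrderOf_coe, z.2])⟩
      left_inv := fun _ => rfl
      right_inv := fun _ => rfl }
  rw [Nat.card_congr e, Nat.card_eq_fintype_card, Fintype.card_subtype]
  exact IsAddCyclic.card_addOrderOf_eq_totient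
    (by rw [← Nat.card_eq_fintype_card, Nat.card_zmultiples])

theorem card_addOrderOf_eq_card_cyclic_mul_totient (d : ℕ) :
    Nat.card {x : G // addOrderOf x = d} =
      Nat.card {H : AddSubgroup G // ∃ x, addOrderOf x = d ∧ H = AddSubgroup.zmultiples x} *
        Nat.totient d := by
  refine Nat.card_eq_card_mul_of_card_fiber
    (fun x => ⟨AddSubgroup.zmultiples x.1, x.1, x.2, rfl⟩) ?_
  rintro ⟨_, x, rfl, rfl⟩
  rw [← card_generators_zmultiples x]
  refine Nat.card_congr
    { toFun := fun y => ⟨y.1.1, congrArg Subtype.val y.2⟩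
      invFun := fun y => ⟨⟨y.1, ?_⟩, Subtype.ext y.2⟩
      left_inv := fun _ => rfl
      right_inv := fun _ => rfl }
  rw [← Nat.card_zmultiples, y.2, Nat.card_zmultiples]

end Generators

theorem card_addOrderOf_eq_prime_pow_pi_zmod (ι : Type*) [Fintype ι] {p k : ℕ} [Fact p.Prime] :
    Nat.card {x : ι → ZMod (p ^ (k + 1)) // addOrderOf x = p ^ (k + 1)} =
      p ^ (k * Fintype.card ι) * (p ^ Fintype.card ι - 1) := by
  have hexp (x : ι → ZMod (p ^ (k + 1))) : p ^ (k + 1) • x = 0 := by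
    funext i; simp [nsmul_eq_mul]
  have htors : Nat.card {x : ι → ZMod (p ^ (k + 1)) // ¬addOrderOf x = p ^ (k + 1)} =
      p ^ (k * Fintype.card ι) := by
    simp_rw [addOrderOf_eq_prime_pow_succ_iff (hexp _), not_not]
    rw [Pi.card_nsmul_eq_zero, ZMod.card_nsmul_eq_zero (pow_dvd_pow p k.le_succ), pow_mul]
  have hsum := Nat.card_subtype_add_card_subtype_not fun x : ι → ZMod (p ^ (k + 1)) =>
    addOrderOf x = p ^ (k + 1)
  rw [htors, Nat.card_fun, Nat.card_zmod, Nat.card_eq_fintype_card (α := ι), ← pow_mul, add_mul,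
    one_mul, pow_add p (k * _)] at hsum
  rw [Nat.mul_sub_one]
  omega

/-- The number of cyclic subgroups of order exactly `ℓ^m` of the group `(ZMod ℓ^m)⁴`
(i.e. subgroups generated by a single element of additive order exactly `ℓ^m`) is exactly
`ℓ^{3m} + ℓ^{3m−1} + ℓ^{3m−2} + ℓ^{3m−3}`. -/
theorem stmt_1 (ℓ m : ℕ) (hℓ : ℓ.Prime) (hm : 1 ≤ m) :
    Nat.card {H : AddSubgroup (Fin 4 → ZMod (ℓ ^ m)) //
        ∃ x : Fin 4 → ZMod (ℓ ^ m), addOrderOf x = ℓ ^ m ∧ H = AddSubgroup.zmultiples x} =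
      ℓ ^ (3 * m) + ℓ ^ (3 * m - 1) + ℓ ^ (3 * m - 2) + ℓ ^ (3 * m - 3) := by
  have := Fact.mk hℓ
  obtain ⟨k, rfl⟩ := Nat.exists_eq_add_of_le' hm
  have hcount := (card_addOrderOf_eq_prime_pow_pi_zmod (Fin 4) (p := ℓ) (k := k)).symm.trans
    (card_addOrderOf_eq_card_cyclic_mul_totient _)
  rw [Fintype.card_fin, Nat.totient_prime_pow_succ hℓ] at hcount
  have hfactor : ℓ ^ (k * 4) * (ℓ ^ 4 - 1) =
      (ℓ ^ (3 * (k + 1)) + ℓ ^ (3 * (k + 1) - 1) + ℓ ^ (3 * (k + 1) - 2) +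
        ℓ ^ (3 * (k + 1) - 3)) * (ℓ ^ k * (ℓ - 1)) := by
    rw [show 3 * (k + 1) - 1 = 3 * k + 2 by omega, show 3 * (k + 1) - 2 = 3 * k + 1 by omega,
      show 3 * (k + 1) - 3 = 3 * k by omega]
    zify [hℓ.one_le, Nat.one_le_pow 4 ℓ hℓ.pos]
    ring
  exact Nat.eq_of_mul_eq_mul_right
    (Nat.mul_pos (pow_pos hℓ.pos k) (Nat.sub_pos_of_lt hℓ.one_lt)) (hcount.symm.trans hfactor)
end

section
/- Let H be a cyclic subgroup of (ZMod ℓ^m)⁴ generated by an element of additive order exactly ℓ^m (an 'isotropic line'). Then H is isotropic, H is contained in its orthogonal complement H^⊥, and the cardinality of H^⊥ is exactly ℓ^{3m}. -/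
/-!
Isotropy holds because `ω` is alternating and `H` is cyclic. Since `x` has additive order `ℓ^m`,
not all of its coordinates lie in the maximal ideal `(ℓ)`, so some `x i` is a unit; the functional
`y ↦ ω(y, x)` hits `± x i` on basis vectors, hence is onto `ZMod ℓ^m`. Its kernel is `H^⊥`, a
subgroup of index `ℓ^m` in a group of order `ℓ^{4m}`.
-/

open LinearMap (BilinForm)

lemma ZMod.isUnit_of_addOrderOf_eq {n : ℕ} [NeZero n] {a : ZMod n} (h : addOrderOf a = n) :
    IsUnit a := by
  rw [← ZMod.natCast_zmod_val a, ZMod.isUnit_iff_coprime, Nat.coprime_comm]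
  rw [← ZMod.natCast_zmod_val a, ZMod.addOrderOf_coe _ (NeZero.ne n)] at h
  exact Nat.div_eq_self.mp h |>.resolve_left (NeZero.ne n)

lemma ZMod.addOrderOf_dvd_pow_pred_of_not_isUnit {p k : ℕ} (hp : p.Prime) {a : ZMod (p ^ k)}
    (ha : ¬IsUnit a) : addOrderOf a ∣ p ^ (k - 1) := by
  have : NeZero (p ^ k) := ⟨pow_ne_zero k hp.ne_zero⟩
  obtain ⟨j, hjk, hj⟩ :=
    (Nat.dvd_prime_pow hp).mp (ZMod.card (p ^ k) ▸ addOrderOf_dvd_card (x := a))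
  have hj_ne : j ≠ k := fun h => ha (ZMod.isUnit_of_addOrderOf_eq (by rw [hj, h]))
  exact hj ▸ pow_dvd_pow p (by omega)

lemma exists_isUnit_apply_of_addOrderOf_eq {ι : Type*} {p k : ℕ} (hp : p.Prime) (hk : 0 < k)
    {x : ι → ZMod (p ^ k)} (hx : addOrderOf x = p ^ k) : ∃ i, IsUnit (x i) := by
  by_contra! hx_unit
  have hx_pred : p ^ (k - 1) • x = 0 := funext fun i =>
    addOrderOf_dvd_iff_nsmul_eq_zero.mp (ZMod.addOrderOf_dvd_pow_pred_of_not_isUnit hp (hx_unit i))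
  have := (Nat.pow_dvd_pow_iff_le_right hp.one_lt).mp
    (hx ▸ addOrderOf_dvd_of_nsmul_eq_zero hx_pred)
  omega

lemma AddMonoidHom.card_ker_mul_card_of_surjective {G G' : Type*} [AddGroup G] [AddGroup G']
    (f : G →+ G') (hf : Function.Surjective f) : Nat.card f.ker * Nat.card G' = Nat.card G := by
  rw [← AddSubgroup.card_top (G := G'), ← f.range_eq_top.mpr hf, ← AddSubgroup.index_ker]
  exact f.ker.card_mul_index

namespace LinearMap.BilinForm

variable {R M : Type*} [CommRing R] [AddCommGroup M] [Module R M] {B : BilinForm R M}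

lemma IsAlt.apply_eq_zero_of_mem_zmultiples (hB : B.IsAlt) {x a b : M}
    (ha : a ∈ AddSubgroup.zmultiples x) (hb : b ∈ AddSubgroup.zmultiples x) : B a b = 0 := by
  obtain ⟨j, rfl⟩ := ha
  obtain ⟨k, rfl⟩ := hb
  simp [hB.self_eq_zero x]

lemma forall_mem_zmultiples_apply_eq_zero_iff {x y : M} :
    (∀ h ∈ AddSubgroup.zmultiples x, B y h = 0) ↔ B y x = 0 := by
  refine ⟨fun h => h x (AddSubgroup.mem_zmultiples x), ?_⟩
  rintro hx _ ⟨k, rfl⟩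
  simp [hx]

end LinearMap.BilinForm

section Symplectic

variable (R : Type*) [CommRing R]

def stdSymplecticForm : BilinForm R (Fin 4 → R) :=
  LinearMap.mk₂ R (fun x y => x 0 * y 1 - x 1 * y 0 + x 2 * y 3 - x 3 * y 2)
    (fun _ _ _ => by simp only [Pi.add_apply]; ring)
    (fun _ _ _ => by simp only [Pi.smul_apply, smul_eq_mul]; ring)
    (fun _ _ _ => by simp only [Pi.add_apply]; ring)
    (fun _ _ _ => by simp only [Pi.smul_apply, smul_eq_mul]; ring)

variable {R}

@[simp]
lemma stdSymplecticForm_apply (x y : Fin 4 → R) :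
    stdSymplecticForm R x y = x 0 * y 1 - x 1 * y 0 + x 2 * y 3 - x 3 * y 2 :=
  rfl

lemma stdSymplecticForm_isAlt : (stdSymplecticForm R).IsAlt := fun x => by
  simp only [stdSymplecticForm_apply]; ring

lemma mem_range_stdSymplecticForm_flip (x : Fin 4 → R) (i : Fin 4) :
    x i ∈ LinearMap.range ((stdSymplecticForm R).flip x) := by
  fin_cases i
  · exact ⟨-Pi.single 1 1, by simp⟩
  · exact ⟨Pi.single 0 1, by simp⟩
  · exact ⟨-Pi.single 3 1, by simp⟩
  · exact ⟨Pi.single 2 1, by simp⟩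

lemma stdSymplecticForm_flip_surjective {x : Fin 4 → R} {i : Fin 4} (hx : IsUnit (x i)) :
    Function.Surjective ((stdSymplecticForm R).flip x) :=
  LinearMap.range_eq_top.mp (Ideal.eq_top_of_isUnit_mem _ (mem_range_stdSymplecticForm_flip x i) hx)

end Symplectic

/-- Let `H` be a cyclic subgroup of `(ZMod ℓ^m)⁴` generated by an element of additive order
exactly `ℓ^m` (an "isotropic line").  Then `H` is isotropic for the standard symplectic form
`ω(x,y) = x₁y₂ − x₂y₁ + x₃y₄ − x₄y₃`, `H` is contained in its orthogonal complement `H^⊥`,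
and `#H^⊥ = ℓ^{3m}`. -/
theorem stmt_3 (ℓ m : ℕ) (hℓ : ℓ.Prime) (hm : 1 ≤ m)
    (x : Fin 4 → ZMod (ℓ ^ m)) (hx : addOrderOf x = ℓ ^ m)
    (H : AddSubgroup (Fin 4 → ZMod (ℓ ^ m))) (hH : H = AddSubgroup.zmultiples x) :
    (∀ a ∈ H, ∀ b ∈ H,
        a 0 * b 1 - a 1 * b 0 + a 2 * b 3 - a 3 * b 2 = (0 : ZMod (ℓ ^ m))) ∧
    ((H : Set (Fin 4 → ZMod (ℓ ^ m))) ⊆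
        {y : Fin 4 → ZMod (ℓ ^ m) | ∀ h ∈ H,
          y 0 * h 1 - y 1 * h 0 + y 2 * h 3 - y 3 * h 2 = (0 : ZMod (ℓ ^ m))}) ∧
    Nat.card {y : Fin 4 → ZMod (ℓ ^ m) // ∀ h ∈ H,
        y 0 * h 1 - y 1 * h 0 + y 2 * h 3 - y 3 * h 2 = (0 : ZMod (ℓ ^ m))} =
      ℓ ^ (3 * m) := by
  have : NeZero (ℓ ^ m) := ⟨pow_ne_zero m hℓ.ne_zero⟩
  subst hH
  have isotropic : ∀ a ∈ AddSubgroup.zmultiples x, ∀ b ∈ AddSubgroup.zmultiples x,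
      stdSymplecticForm _ a b = 0 := fun a ha b hb =>
    stdSymplecticForm_isAlt.apply_eq_zero_of_mem_zmultiples ha hb
  refine ⟨isotropic, fun y hy h hh => isotropic y hy h hh, ?_⟩
  let f := ((stdSymplecticForm (ZMod (ℓ ^ m))).flip x).toAddMonoidHom
  obtain ⟨i, hi⟩ := exists_isUnit_apply_of_addOrderOf_eq hℓ hm hx
  have hcard := f.card_ker_mul_card_of_surjective (stdSymplecticForm_flip_surjective hi)
  have horth : ∀ y, (∀ h ∈ AddSubgroup.zmultiples x, stdSymplecticForm _ y h = 0) ↔ y ∈ f.ker :=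
    fun y => LinearMap.BilinForm.forall_mem_zmultiples_apply_eq_zero_iff
  change Nat.card {y // ∀ h ∈ _, stdSymplecticForm _ y h = 0} = _
  rw [Nat.card_congr (Equiv.subtypeEquivRight horth)]
  rw [Nat.card_zmod, Nat.card_fun, Nat.card_zmod, Nat.card_fin] at hcard
  exact Nat.eq_of_mul_eq_mul_right (pow_pos hℓ.pos m) (hcard.trans (by ring))
end

section
/- Let H be a cyclic subgroup of (ZMod ℓ^m)⁴ generated by an element of additive order exactly ℓ^m. Then the number of isotropic submodules of (ZMod ℓ^m)⁴ that are isomorphic as ZMod ℓ^m-modules to (ZMod ℓ^m)² and contain H is exactly ℓ^m + ℓ^{m−1}. -/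
/-!
An element of additive order `ℓ^m` has a unit coordinate. For vectors `x, y` with `ω x y` a unit,
the symplectic transvection `a ↦ a + c ω(a, y - x) (y - x)`, `c = (ω x y)⁻¹`, sends `x` to `y`;
chaining two of them reduces the count to `x = e0`. A free isotropic plane through `e0` lies in
`e0^⊥ = {a₁ = 0}`, so it is spanned by `e0` and some `(0, 0, c, d)`, and freeness forces `(c, d)` to
be unimodular. Such planes are the points of the projective line over `ZMod (ℓ^m)`, namely
`[t : 1]` for any `t` and `[1 : s]` for a nonunit `s`, which gives `ℓ^m + ℓ^(m-1)`.
-/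

namespace Submodule

variable {R M : Type*} [CommRing R] [AddCommGroup M] [Module R M]

theorem span_pair_smul_add (x y : M) (α : R) {β : R} (hβ : IsUnit β) :
    span R {x, α • x + β • y} = span R {x, y} := by
  obtain ⟨u, rfl⟩ := hβ
  apply le_antisymm <;> rw [span_le, Set.insert_subset_iff, Set.singleton_subset_iff] <;>
    refine ⟨subset_span (Set.mem_insert _ _), mem_span_pair.2 ?_⟩
  · exact ⟨α, u, rfl⟩
  · exact ⟨-(↑u⁻¹ * α), ↑u⁻¹, by rw [smul_add, smul_smul, smul_smul, u.inv_mul, one_smul]; module⟩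

theorem exists_linearIndependent_pair_of_linearEquiv {K : Submodule R M}
    (φ : K ≃ₗ[R] (Fin 2 → R)) :
    ∃ u w : M, LinearIndependent R ![u, w] ∧ K = span R {u, w} := by
  set b := Module.Basis.ofEquivFun φ
  have hb : (K.subtype ∘ b) = ![(b 0 : M), b 1] := by
    ext i : 1; fin_cases i <;> rfl
  refine ⟨b 0, b 1, hb ▸ b.linearIndependent.map' K.subtype K.ker_subtype, ?_⟩
  rw [← Matrix.range_cons_cons_empty, ← hb, Set.range_comp, span_image, b.span_eq, map_top,
    range_subtype]

theorem nonempty_linearEquiv_of_linearIndependent_pair {x y : M}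
    (h : LinearIndependent R ![x, y]) : Nonempty (span R {x, y} ≃ₗ[R] (Fin 2 → R)) := by
  rw [← Matrix.range_cons_cons_empty]
  exact ⟨(Module.Basis.span h).equivFun⟩

end Submodule

namespace Symplectic4

variable {R : Type*} [CommRing R]

def ω (a b : Fin 4 → R) : R :=
  a 0 * b 1 - a 1 * b 0 + a 2 * b 3 - a 3 * b 2

def e0 : Fin 4 → R := ![1, 0, 0, 0]

def IsLagrangianContaining (x : Fin 4 → R) (K : Submodule R (Fin 4 → R)) : Prop :=
  (∀ a ∈ K, ∀ b ∈ K, ω a b = 0) ∧ Nonempty (K ≃ₗ[R] (Fin 2 → R)) ∧ x ∈ K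

def transvection (v : Fin 4 → R) (c : R) : (Fin 4 → R) ≃ₗ[R] (Fin 4 → R) where
  toFun a := a + (c * ω a v) • v
  invFun a := a - (c * ω a v) • v
  map_add' a b := by ext i; simp only [ω, Pi.add_apply, Pi.smul_apply, smul_eq_mul]; ring
  map_smul' r a := by
    ext i; simp only [ω, Pi.add_apply, Pi.smul_apply, smul_eq_mul, RingHom.id_apply]; ring
  left_inv a := by
    ext i; simp only [ω, Pi.add_apply, Pi.sub_apply, Pi.smul_apply, smul_eq_mul]; ring
  right_inv a := by
    ext i; simp only [ω, Pi.add_apply, Pi.sub_apply, Pi.smul_apply, smul_eq_mul]; ring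

theorem ω_transvection (v : Fin 4 → R) (c : R) (a b : Fin 4 → R) :
    ω (transvection v c a) (transvection v c b) = ω a b := by
  simp only [transvection, LinearEquiv.coe_mk, LinearMap.coe_mk, AddHom.coe_mk, ω,
    Pi.add_apply, Pi.smul_apply, smul_eq_mul]
  ring

theorem transvection_apply_self_of_mul_eq_one {x y : Fin 4 → R} {c : R} (h : c * ω x y = 1) :
    transvection (y - x) c x = y := by
  have : ω x (y - x) = ω x y := by simp only [ω, Pi.sub_apply]; ring
  simp only [transvection, LinearEquiv.coe_mk, LinearMap.coe_mk, AddHom.coe_mk, this, h, one_smul,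
    add_sub_cancel]

theorem isLagrangianContaining_map_iff {g : (Fin 4 → R) ≃ₗ[R] (Fin 4 → R)}
    (hg : ∀ a b, ω (g a) (g b) = ω a b) {y : Fin 4 → R} {K : Submodule R (Fin 4 → R)} :
    IsLagrangianContaining (g y) (K.map g.toLinearMap) ↔ IsLagrangianContaining y K := by
  refine and_congr ?_ (and_congr ?_ ?_)
  · simp only [Submodule.mem_map, forall_exists_index, and_imp, forall_apply_eq_imp_iff₂,
      LinearEquiv.coe_coe, hg]
  · exact ⟨fun ⟨φ⟩ => ⟨(g.submoduleMap K).trans φ⟩, fun ⟨φ⟩ => ⟨(g.submoduleMap K).symm.trans φ⟩⟩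
  · rw [Submodule.mem_map_equiv, g.symm_apply_apply]

theorem card_isLagrangianContaining_eq_of_isUnit {x y : Fin 4 → R} (h : IsUnit (ω x y)) :
    Nat.card {K : Submodule R (Fin 4 → R) // IsLagrangianContaining x K} =
      Nat.card {K : Submodule R (Fin 4 → R) // IsLagrangianContaining y K} := by
  obtain ⟨c, hc⟩ : ∃ c, c * ω x y = 1 := ⟨↑h.unit⁻¹, h.val_inv_mul⟩
  set g := transvection (y - x) c
  refine Nat.card_congr ((Submodule.orderIsoMapComap g).toEquiv.subtypeEquiv fun K => ?_)
  rw [RelIso.coe_fn_toEquiv, Submodule.orderIsoMapComap_apply,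
    ← transvection_apply_self_of_mul_eq_one hc, isLagrangianContaining_map_iff (ω_transvection _ _)]

theorem card_isLagrangianContaining_eq_e0 {x : Fin 4 → R} (hx : ∃ i, IsUnit (x i)) :
    Nat.card {K : Submodule R (Fin 4 → R) // IsLagrangianContaining x K} =
      Nat.card {K : Submodule R (Fin 4 → R) // IsLagrangianContaining e0 K} := by
  suffices ∃ z, z 1 = 1 ∧ IsUnit (ω z x) by
    obtain ⟨z, hz1, hz⟩ := this
    have he0z : IsUnit (ω e0 z) := by simp [ω, e0, hz1]
    rw [card_isLagrangianContaining_eq_of_isUnit he0z, card_isLagrangianContaining_eq_of_isUnit hz]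
  obtain ⟨i, hi⟩ := hx
  fin_cases i
  · exact ⟨![0, 1, 0, 0], rfl, by simpa [ω] using hi⟩
  all_goals obtain ⟨u, hu⟩ := hi; simp only [Fin.reduceFinMk, Fin.isValue] at hu
  · refine ⟨![↑u⁻¹ * (1 + x 0), 1, 0, 0], rfl, ?_⟩
    convert isUnit_one
    simp only [ω, ← hu, Matrix.cons_val, Matrix.cons_val_zero, Matrix.cons_val_one]
    linear_combination (1 + x 0) * u.inv_mul
  · refine ⟨![0, 1, 0, -(↑u⁻¹ * (1 + x 0))], rfl, ?_⟩
    convert isUnit_one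
    simp only [ω, ← hu, Matrix.cons_val, Matrix.cons_val_zero, Matrix.cons_val_one]
    linear_combination (1 + x 0) * u.inv_mul
  · refine ⟨![0, 1, ↑u⁻¹ * (1 + x 0), 0], rfl, ?_⟩
    convert isUnit_one
    simp only [ω, ← hu, Matrix.cons_val, Matrix.cons_val_zero, Matrix.cons_val_one]
    linear_combination (1 + x 0) * u.inv_mul

def plane (c d : R) : Submodule R (Fin 4 → R) :=
  Submodule.span R {e0, ![0, 0, c, d]}

theorem isLagrangianContaining_plane {c d : R} (h : IsUnit c ∨ IsUnit d) :
    IsLagrangianContaining e0 (plane c d) := by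
  refine ⟨?_, Submodule.nonempty_linearEquiv_of_linearIndependent_pair ?_,
    Submodule.subset_span (Set.mem_insert _ _)⟩
  · intro a ha b hb
    obtain ⟨s, t, rfl⟩ := Submodule.mem_span_pair.1 ha
    obtain ⟨s', t', rfl⟩ := Submodule.mem_span_pair.1 hb
    simp only [ω, e0, Pi.add_apply, Pi.smul_apply, smul_eq_mul, Matrix.cons_val,
      Matrix.cons_val_zero, Matrix.cons_val_one]
    ring
  · refine LinearIndependent.pair_iff.2 fun s t hst => ?_
    refine ⟨by simpa [e0] using congr_fun hst 0, ?_⟩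
    rcases h with h | h
    · exact h.mul_left_eq_zero.1 (by simpa [e0] using congr_fun hst 2)
    · exact h.mul_left_eq_zero.1 (by simpa [e0] using congr_fun hst 3)

theorem exists_mul_eq_of_plane_eq {c d c' d' : R} (h : plane c d = plane c' d') :
    ∃ b, b * c = c' ∧ b * d = d' := by
  have hmem : ![0, 0, c', d'] ∈ plane c d := h ▸ Submodule.subset_span (Set.mem_insert_of_mem _ rfl)
  obtain ⟨a, b, hab⟩ := Submodule.mem_span_pair.1 hmem
  exact ⟨b, by simpa [e0] using congr_fun hab 2, by simpa [e0] using congr_fun hab 3⟩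

theorem plane_mul {u : R} (hu : IsUnit u) (c d : R) : plane (u * c) (u * d) = plane c d := by
  have : ![(0 : R), 0, u * c, u * d] = (0 : R) • e0 + u • ![0, 0, c, d] := by
    ext i; fin_cases i <;> simp [e0]
  rw [plane, this, Submodule.span_pair_smul_add _ _ _ hu, plane]

section Socle

-- `N` plays the role of `ℓ^(m-1)` in `ZMod (ℓ^m)`: its annihilator is exactly the nonunits.
variable {N : R} (hN : ∀ a : R, N * a = 0 ↔ ¬IsUnit a)
include hN

theorem exists_isUnit_apply_of_smul_ne_zero {ι : Type*} {x : ι → R} (hx : N • x ≠ 0) :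
    ∃ i, IsUnit (x i) := by
  by_contra! h
  exact hx (funext fun i => (hN (x i)).2 (h i))

theorem exists_eq_plane {K : Submodule R (Fin 4 → R)} (hK : IsLagrangianContaining e0 K) :
    ∃ c d : R, (IsUnit c ∨ IsUnit d) ∧ K = plane c d := by
  have hN0 : N ≠ 0 := by simpa using (hN 1).not
  obtain ⟨hiso, ⟨φ⟩, he⟩ := hK
  obtain ⟨u, w, hli, rfl⟩ := Submodule.exists_linearIndependent_pair_of_linearEquiv φ
  clear φ
  obtain ⟨α, β, hαβ⟩ := Submodule.mem_span_pair.1 he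
  wlog hβ : IsUnit β generalizing u w α β
  · have hα : IsUnit α := by
      by_contra hα
      refine hN0 (Eq.symm ?_)
      simpa [e0, mul_add, ← mul_assoc, (hN α).2 hα, (hN β).2 hβ] using
        congr_fun (congrArg (N • ·) hαβ) 0
    rw [Set.pair_comm] at hiso he ⊢
    exact this w u (LinearIndependent.pair_symm_iff.1 hli) hiso he β α (by rwa [add_comm]) hα
  have hu1 : u 1 = 0 := by
    simpa [ω, e0] using hiso u (Submodule.subset_span (Set.mem_insert _ _)) e0 he
  have hv : (-u 0) • e0 + (1 : R) • u = ![0, 0, u 2, u 3] := by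
    ext i; fin_cases i <;> simp [e0, hu1]
  refine ⟨u 2, u 3, ?_, ?_⟩
  · by_contra! h
    -- otherwise `N • (u - u 0 • e0) = 0` is a nontrivial relation between `u` and `w`
    have hNu : (N - N * u 0 * α) • u + (-(N * u 0 * β)) • w = 0 := by
      calc _ = N • ((-u 0) • (α • u + β • w) + (1 : R) • u) := by module
        _ = 0 := by
          rw [hαβ, hv]; ext i; fin_cases i <;> simp [(hN _).2 h.1, (hN _).2 h.2]
    obtain ⟨h1, h2⟩ := LinearIndependent.pair_iff.1 hli _ _ hNu
    rw [neg_eq_zero, hβ.mul_left_eq_zero] at h2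
    exact hN0 (by simpa [h2] using h1)
  · rw [plane, ← hv, Submodule.span_pair_smul_add _ _ _ isUnit_one, Set.pair_comm e0 u, ← hαβ,
      Submodule.span_pair_smul_add _ _ _ hβ]

theorem bijective_sumElim_plane :
    Function.Bijective (Sum.elim
      (fun t : R => (⟨plane t 1, isLagrangianContaining_plane (.inr isUnit_one)⟩ :
        {K // IsLagrangianContaining e0 K}))
      (fun s : {s : R // ¬IsUnit s} =>
        ⟨plane 1 s, isLagrangianContaining_plane (.inl isUnit_one)⟩)) := by
  constructor
  · rintro (t | ⟨s, hs⟩) (t' | ⟨s', hs'⟩) h <;>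
      obtain ⟨b, hc, hd⟩ := exists_mul_eq_of_plane_eq (congrArg Subtype.val h)
    · simp_all
    · rw [mul_one] at hd
      exact absurd (IsUnit.of_mul_eq_one t hc) (by simpa [hd] using hs')
    · rw [mul_one] at hc
      exact absurd (IsUnit.of_mul_eq_one b (by simpa [mul_comm] using hd)) hs
    · simp_all
  · rintro ⟨K, hK⟩
    obtain ⟨c, d, hcd, rfl⟩ := exists_eq_plane hN hK
    by_cases hd : IsUnit d
    · obtain ⟨u, rfl⟩ := hd
      refine ⟨.inl (↑u⁻¹ * c), Subtype.ext ?_⟩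
      change plane _ 1 = _
      rw [← plane_mul u.isUnit, Units.mul_inv_cancel_left, mul_one]
    · obtain ⟨u, rfl⟩ := hcd.resolve_right hd
      refine ⟨.inr ⟨↑u⁻¹ * d, fun h => hd ?_⟩, Subtype.ext ?_⟩
      · simpa using h
      · change plane 1 _ = _
        rw [← plane_mul u.isUnit, Units.mul_inv_cancel_left, mul_one]

theorem card_isLagrangianContaining_e0 [Finite R] :
    Nat.card {K : Submodule R (Fin 4 → R) // IsLagrangianContaining e0 K} =
      Nat.card R + Nat.card {s : R // ¬IsUnit s} := by
  rw [← Nat.card_sum, Nat.card_eq_of_bijective _ (bijective_sumElim_plane hN)]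

end Socle

end Symplectic4

theorem ZMod.natCast_pow_pred_mul_eq_zero_iff {ℓ m : ℕ} (hℓ : ℓ.Prime) (hm : 1 ≤ m)
    (a : ZMod (ℓ ^ m)) : ((ℓ ^ (m - 1) : ℕ) : ZMod (ℓ ^ m)) * a = 0 ↔ ¬IsUnit a := by
  have : NeZero (ℓ ^ m) := ⟨pow_ne_zero m hℓ.ne_zero⟩
  obtain ⟨k, rfl⟩ := ZMod.natCast_zmod_surjective a
  rw [← Nat.cast_mul, ZMod.natCast_eq_zero_iff, ZMod.isUnit_iff_coprime,
    Nat.coprime_pow_right_iff hm, Nat.coprime_comm, hℓ.coprime_iff_not_dvd, not_not,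
    ← Nat.sub_add_cancel hm, pow_succ, Nat.add_sub_cancel,
    Nat.mul_dvd_mul_iff_left (pow_pos hℓ.pos _)]

theorem ZMod.card_nonunits_prime_pow {ℓ m : ℕ} (hℓ : ℓ.Prime) (hm : 1 ≤ m) :
    Nat.card {a : ZMod (ℓ ^ m) // ¬IsUnit a} = ℓ ^ (m - 1) := by
  have : NeZero (ℓ ^ m) := ⟨pow_ne_zero m hℓ.ne_zero⟩
  classical
  have hunits : Nat.card {a : ZMod (ℓ ^ m) // IsUnit a} = (ℓ ^ m).totient := by
    rw [← ZMod.card_units_eq_totient, ← Nat.card_eq_fintype_card]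
    exact Nat.card_congr (Equiv.ofInjective _ Units.val_injective).symm
  rw [Nat.card_eq_fintype_card, Fintype.card_subtype_compl, ← Nat.card_eq_fintype_card,
    ← Nat.card_eq_fintype_card, hunits, Nat.card_zmod, Nat.totient_prime_pow hℓ hm,
    ← Nat.sub_add_cancel hm, pow_succ, Nat.add_sub_cancel, ← Nat.mul_sub,
    Nat.sub_sub_self hℓ.one_le, mul_one]

open Symplectic4 in
/-- Let `H` be a cyclic subgroup of `(ZMod ℓ^m)⁴` generated by an element of additive order
exactly `ℓ^m`.  Then the number of isotropic submodules of `(ZMod ℓ^m)⁴` (for the standard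
symplectic form `ω(x,y) = x₁y₂ − x₂y₁ + x₃y₄ − x₄y₃`) that are isomorphic as
`ZMod ℓ^m`-modules to `(ZMod ℓ^m)²` and contain `H` is exactly `ℓ^m + ℓ^{m−1}`. -/
theorem stmt_4 (ℓ m : ℕ) (hℓ : ℓ.Prime) (hm : 1 ≤ m)
    (x : Fin 4 → ZMod (ℓ ^ m)) (hx : addOrderOf x = ℓ ^ m)
    (H : AddSubgroup (Fin 4 → ZMod (ℓ ^ m))) (hH : H = AddSubgroup.zmultiples x) :
    Nat.card {K : Submodule (ZMod (ℓ ^ m)) (Fin 4 → ZMod (ℓ ^ m)) //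
        (∀ a ∈ K, ∀ b ∈ K,
          a 0 * b 1 - a 1 * b 0 + a 2 * b 3 - a 3 * b 2 = (0 : ZMod (ℓ ^ m))) ∧
        Nonempty (K ≃ₗ[ZMod (ℓ ^ m)] (Fin 2 → ZMod (ℓ ^ m))) ∧
        (H : Set (Fin 4 → ZMod (ℓ ^ m))) ⊆ (K : Set (Fin 4 → ZMod (ℓ ^ m)))} =
      ℓ ^ m + ℓ ^ (m - 1) := by
  subst hH
  have : NeZero (ℓ ^ m) := ⟨pow_ne_zero m hℓ.ne_zero⟩
  have hN := ZMod.natCast_pow_pred_mul_eq_zero_iff hℓ hm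
  have hNx : ((ℓ ^ (m - 1) : ℕ) : ZMod (ℓ ^ m)) • x ≠ 0 := by
    rw [Nat.cast_smul_eq_nsmul]
    refine nsmul_ne_zero_of_lt_addOrderOf (pow_ne_zero _ hℓ.ne_zero) ?_
    rw [hx]
    exact Nat.pow_lt_pow_right hℓ.one_lt (by omega)
  calc Nat.card _ = Nat.card {K // IsLagrangianContaining x K} :=
        Nat.card_congr (Equiv.subtypeEquivRight fun K =>
          and_congr_right' (and_congr_right' (AddSubgroup.zmultiples_le (H := K.toAddSubgroup))))
    _ = Nat.card {K // IsLagrangianContaining e0 K} :=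
        card_isLagrangianContaining_eq_e0 (exists_isUnit_apply_of_smul_ne_zero hN hNx)
    _ = ℓ ^ m + ℓ ^ (m - 1) := by
        rw [card_isLagrangianContaining_e0 hN, Nat.card_zmod, ZMod.card_nonunits_prime_pow hℓ hm]
end

section
/- Every isotropic submodule H of (ZMod ℓ^m)⁴ that is isomorphic as a ZMod ℓ^m-module to (ZMod ℓ^m)² satisfies H = H^⊥; in particular such an H is a maximal isotropic submodule. -/
section Aux

variable (ℓ m : ℕ)

lemma aux_kill (hℓ : ℓ.Prime) (hm : 1 ≤ m) (x : ZMod (ℓ ^ m))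
    (hx : ¬ IsUnit x) : (ℓ : ZMod (ℓ ^ m)) ^ (m - 1) * x = 0 := by
  haveI : NeZero (ℓ ^ m) := ⟨pow_ne_zero m hℓ.pos.ne'⟩
  have hxv : ((x.val : ℕ) : ZMod (ℓ ^ m)) = x := by
    simp [ZMod.natCast_val, ZMod.cast_id]
  have hdvd : ℓ ∣ x.val := by
    by_contra hnd
    exact hx (hxv ▸ (ZMod.isUnit_iff_coprime x.val (ℓ ^ m)).2
      (Nat.Coprime.pow_right m ((Nat.Prime.coprime_iff_not_dvd hℓ).2 hnd).symm))
  obtain ⟨t, ht⟩ := hdvd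
  have h0 : ((ℓ : ZMod (ℓ ^ m))) ^ m = 0 := by
    rw [← Nat.cast_pow]; exact ZMod.natCast_self _
  calc (ℓ : ZMod (ℓ ^ m)) ^ (m - 1) * x
      = (ℓ : ZMod (ℓ ^ m)) ^ (m - 1) * ((ℓ * t : ℕ) : ZMod (ℓ ^ m)) := by rw [← ht, hxv]
    _ = (ℓ : ZMod (ℓ ^ m)) ^ (m - 1 + 1) * (t : ZMod (ℓ ^ m)) := by push_cast; ring
    _ = 0 := by rw [Nat.sub_add_cancel hm, h0, zero_mul]

lemma aux_cne (hℓ : ℓ.Prime) (hm : 1 ≤ m) :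
    (ℓ : ZMod (ℓ ^ m)) ^ (m - 1) ≠ 0 := by
  haveI : NeZero (ℓ ^ m) := ⟨pow_ne_zero m hℓ.pos.ne'⟩
  rw [← Nat.cast_pow, Ne, ZMod.natCast_eq_zero_iff]
  intro hdvd
  have h1 := Nat.le_of_dvd (pow_pos hℓ.pos _) hdvd
  have h2 : ℓ ^ (m - 1) < ℓ ^ m := Nat.pow_lt_pow_right hℓ.one_lt (Nat.sub_lt (by omega) one_pos)
  omega

lemma exists_unit_minor (hℓ : ℓ.Prime) (hm : 1 ≤ m) (r₁ r₂ : Fin 4 → ZMod (ℓ ^ m))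
    (hind : ∀ a b : ZMod (ℓ ^ m), (∀ k, a * r₁ k + b * r₂ k = 0) → a = 0 ∧ b = 0) :
    ∃ i j, IsUnit (r₁ i * r₂ j - r₁ j * r₂ i) := by
  set c : ZMod (ℓ ^ m) := (ℓ : ZMod (ℓ ^ m)) ^ (m - 1) with hc
  by_contra hno
  push_neg at hno
  have hmin : ∀ i j, c * (r₁ i * r₂ j - r₁ j * r₂ i) = 0 :=
    fun i j => aux_kill ℓ m hℓ hm _ (hno i j)
  by_cases hz : ∃ i, c * r₁ i ≠ 0 ∨ c * r₂ i ≠ 0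
  · obtain ⟨i, hi⟩ := hz
    have := hind (c * r₂ i) (-(c * r₁ i)) (fun k => by
      have := hmin i k
      ring_nf
      ring_nf at this
      linear_combination -this)
    rcases hi with hi | hi
    · exact hi (by linear_combination -this.2)
    · exact hi this.1
  · push_neg at hz
    have := hind c 0 (fun k => by rw [(hz k).1, zero_mul, add_zero])
    exact aux_cne ℓ m hℓ hm this.1

end Aux

/-- The linear map `x ↦ ω(x, h)` for the standard symplectic form. -/
def sform {n : ℕ} (h : Fin 4 → ZMod n) : (Fin 4 → ZMod n) →ₗ[ZMod n] ZMod n where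
  toFun x := x 0 * h 1 - x 1 * h 0 + x 2 * h 3 - x 3 * h 2
  map_add' a b := by simp only [Pi.add_apply]; ring
  map_smul' r a := by simp only [Pi.smul_apply, smul_eq_mul, RingHom.id_apply]; ring

lemma sform_apply {n : ℕ} (h x : Fin 4 → ZMod n) :
    sform h x = x 0 * h 1 - x 1 * h 0 + x 2 * h 3 - x 3 * h 2 := rfl

lemma sform_single {n : ℕ} (h : Fin 4 → ZMod n) (k : Fin 4) :
    sform h (Pi.single k 1) = ![h 1, -h 0, h 3, -h 2] k := by
  fin_cases k <;> simp [sform_apply, Pi.single_apply]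


/-- Every isotropic submodule `H` of `(ZMod ℓ^m)⁴` (for the standard symplectic form
`ω(x,y) = x₁y₂ − x₂y₁ + x₃y₄ − x₄y₃`) that is isomorphic as a `ZMod ℓ^m`-module to
`(ZMod ℓ^m)²` satisfies `H = H^⊥`; in particular such an `H` is a maximal isotropic
submodule. -/
theorem stmt_5 (ℓ m : ℕ) (hℓ : ℓ.Prime) (hm : 1 ≤ m)
    (H : Submodule (ZMod (ℓ ^ m)) (Fin 4 → ZMod (ℓ ^ m)))
    (hiso : ∀ a ∈ H, ∀ b ∈ H,
      a 0 * b 1 - a 1 * b 0 + a 2 * b 3 - a 3 * b 2 = (0 : ZMod (ℓ ^ m)))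
    (hfree : Nonempty (H ≃ₗ[ZMod (ℓ ^ m)] (Fin 2 → ZMod (ℓ ^ m)))) :
    ((H : Set (Fin 4 → ZMod (ℓ ^ m))) =
      {y : Fin 4 → ZMod (ℓ ^ m) | ∀ h ∈ H,
        y 0 * h 1 - y 1 * h 0 + y 2 * h 3 - y 3 * h 2 = (0 : ZMod (ℓ ^ m))}) ∧
    ∀ K : Submodule (ZMod (ℓ ^ m)) (Fin 4 → ZMod (ℓ ^ m)),
      (∀ a ∈ K, ∀ b ∈ K,
        a 0 * b 1 - a 1 * b 0 + a 2 * b 3 - a 3 * b 2 = (0 : ZMod (ℓ ^ m))) →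
      H ≤ K → K = H := by
  classical
  haveI : NeZero (ℓ ^ m) := ⟨pow_ne_zero m hℓ.pos.ne'⟩
  haveI : Fact (1 < ℓ ^ m) := ⟨Nat.one_lt_pow (by omega) hℓ.one_lt⟩
  obtain ⟨e⟩ := hfree
  set v₁ : H := e.symm (Pi.single 0 1) with hv₁
  set v₂ : H := e.symm (Pi.single 1 1) with hv₂
  set h₁ : Fin 4 → ZMod (ℓ ^ m) := (v₁ : Fin 4 → ZMod (ℓ ^ m)) with hh₁
  set h₂ : Fin 4 → ZMod (ℓ ^ m) := (v₂ : Fin 4 → ZMod (ℓ ^ m)) with hh₂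
  have h₁mem : h₁ ∈ H := v₁.2
  have h₂mem : h₂ ∈ H := v₂.2
  -- spanning
  have hspan : ∀ y ∈ H, ∃ a b : ZMod (ℓ ^ m), y = a • h₁ + b • h₂ := by
    intro y hy
    refine ⟨e ⟨y, hy⟩ 0, e ⟨y, hy⟩ 1, ?_⟩
    have key : (⟨y, hy⟩ : H) = e ⟨y, hy⟩ 0 • v₁ + e ⟨y, hy⟩ 1 • v₂ := by
      apply e.injective
      rw [map_add, map_smul, map_smul, hv₁, hv₂, e.apply_symm_apply, e.apply_symm_apply]
      funext i
      fin_cases i <;> simp [Pi.single_apply]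
    have := congrArg (Subtype.val) key
    simpa using this
  -- independence
  have hind : ∀ a b : ZMod (ℓ ^ m), a • h₁ + b • h₂ = 0 → a = 0 ∧ b = 0 := by
    intro a b hab
    have key : a • v₁ + b • v₂ = 0 := by
      apply Subtype.ext
      simpa using hab
    apply_fun e at key
    rw [map_add, map_smul, map_smul, hv₁, hv₂, e.apply_symm_apply, e.apply_symm_apply,
      map_zero] at key
    constructor
    · have := congrFun key 0; simpa using this
    · have := congrFun key 1; simpa using this
  -- the "rows" of the pairing matrix
  set r₁ : Fin 4 → ZMod (ℓ ^ m) := ![h₁ 1, -h₁ 0, h₁ 3, -h₁ 2] with hr₁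
  set r₂ : Fin 4 → ZMod (ℓ ^ m) := ![h₂ 1, -h₂ 0, h₂ 3, -h₂ 2] with hr₂
  have hindr : ∀ a b : ZMod (ℓ ^ m), (∀ k, a * r₁ k + b * r₂ k = 0) → a = 0 ∧ b = 0 := by
    intro a b hab
    apply hind a b
    funext k
    have h0 := hab 0; have h1 := hab 1; have h2 := hab 2; have h3 := hab 3
    simp only [hr₁, hr₂, Matrix.cons_val_zero, Matrix.cons_val_one, Matrix.head_cons,
      Matrix.cons_val_two, Matrix.tail_cons, Matrix.cons_val_three] at h0 h1 h2 h3
    fin_cases k <;>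
      simp only [Pi.add_apply, Pi.smul_apply, smul_eq_mul, Pi.zero_apply]
    · show a * h₁ 0 + b * h₂ 0 = 0; linear_combination -h1
    · show a * h₁ 1 + b * h₂ 1 = 0; linear_combination h0
    · show a * h₁ 2 + b * h₂ 2 = 0; linear_combination -h3
    · show a * h₁ 3 + b * h₂ 3 = 0; linear_combination h2
  obtain ⟨i, j, hd⟩ := exists_unit_minor ℓ m hℓ hm r₁ r₂ hindr
  obtain ⟨u, hu⟩ := hd.exists_right_inv
  -- the pairing map ψ
  set ψ : (Fin 4 → ZMod (ℓ ^ m)) →ₗ[ZMod (ℓ ^ m)] (Fin 2 → ZMod (ℓ ^ m)) :=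
    LinearMap.pi ![sform h₁, sform h₂] with hψ
  have hψ0 : ∀ x, ψ x 0 = sform h₁ x := fun x => rfl
  have hψ1 : ∀ x, ψ x 1 = sform h₂ x := fun x => rfl
  have hs₁ : ∀ k, sform h₁ (Pi.single k 1) = r₁ k := fun k => sform_single h₁ k
  have hs₂ : ∀ k, sform h₂ (Pi.single k 1) = r₂ k := fun k => sform_single h₂ k
  -- surjectivity of ψ
  have hsurj : Function.Surjective ψ := by
    intro v
    set f₁ : ZMod (ℓ ^ m) := (r₂ j * v 0 - r₁ j * v 1) * u with hf₁
    set f₂ : ZMod (ℓ ^ m) := (r₁ i * v 1 - r₂ i * v 0) * u with hf₂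
    refine ⟨f₁ • (Pi.single i 1 : Fin 4 → ZMod (ℓ ^ m)) + f₂ • (Pi.single j 1 : Fin 4 → ZMod (ℓ ^ m)), ?_⟩
    funext w
    fin_cases w
    · show ψ _ 0 = v 0
      rw [hψ0, map_add, map_smul, map_smul, hs₁ i, hs₁ j]
      simp only [smul_eq_mul, hf₁, hf₂]
      linear_combination v 0 * hu
    · show ψ _ 1 = v 1
      rw [hψ1, map_add, map_smul, map_smul, hs₂ i, hs₂ j]
      simp only [smul_eq_mul, hf₁, hf₂]
      linear_combination v 1 * hu
  -- kernel of ψ is the orthogonal complement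
  have hker : ∀ y, y ∈ LinearMap.ker ψ ↔ ∀ h ∈ H,
      y 0 * h 1 - y 1 * h 0 + y 2 * h 3 - y 3 * h 2 = 0 := by
    intro y
    rw [LinearMap.mem_ker]
    constructor
    · intro hy h hh
      obtain ⟨a, b, rfl⟩ := hspan h hh
      have e1 : sform h₁ y = 0 := by rw [← hψ0, hy]; rfl
      have e2 : sform h₂ y = 0 := by rw [← hψ1, hy]; rfl
      rw [sform_apply] at e1 e2
      simp only [Pi.add_apply, Pi.smul_apply, smul_eq_mul]
      linear_combination a * e1 + b * e2
    · intro hy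
      funext w
      fin_cases w
      · show ψ y 0 = 0
        rw [hψ0, sform_apply]; exact hy h₁ h₁mem
      · show ψ y 1 = 0
        rw [hψ1, sform_apply]; exact hy h₂ h₂mem
  have hHker : H ≤ LinearMap.ker ψ := by
    intro y hy
    rw [hker]
    intro h hh
    exact hiso y hy h hh
  -- counting
  have hquot : Nat.card ((Fin 4 → ZMod (ℓ ^ m)) ⧸ LinearMap.ker ψ) =
      Nat.card (Fin 2 → ZMod (ℓ ^ m)) := by
    rw [Nat.card_congr ψ.quotKerEquivRange.toEquiv, LinearMap.range_eq_top.2 hsurj]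
    exact Nat.card_congr Submodule.topEquiv.toEquiv
  have hcard : (ℓ ^ m) ^ 4 = Nat.card (LinearMap.ker ψ) * (ℓ ^ m) ^ 2 := by
    have h0 := Submodule.card_eq_card_quotient_mul_card (LinearMap.ker ψ)
    rw [hquot] at h0
    rw [show ((ℓ^m)^4 : ℕ) = Nat.card (Fin 4 → ZMod (ℓ ^ m)) by
        simp [Nat.card_fun, Nat.card_zmod], h0,
      show Nat.card (Fin 2 → ZMod (ℓ ^ m)) = (ℓ^m)^2 by simp [Nat.card_fun, Nat.card_zmod]]
  have hkcard : Nat.card (LinearMap.ker ψ) = (ℓ ^ m) ^ 2 := by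
    have hne : (ℓ ^ m) ^ 2 ≠ 0 := pow_ne_zero 2 (pow_ne_zero m hℓ.pos.ne')
    have : (ℓ ^ m) ^ 2 * (ℓ ^ m) ^ 2 = Nat.card (LinearMap.ker ψ) * (ℓ ^ m) ^ 2 := by
      rw [← hcard]; ring
    exact (Nat.eq_of_mul_eq_mul_right (Nat.pos_of_ne_zero hne) this).symm
  have hHcard : Nat.card H = (ℓ ^ m) ^ 2 := by
    rw [Nat.card_congr e.toEquiv]; simp [Nat.card_fun, Nat.card_zmod]
  -- H = ker ψ as sets
  have hsetH : (H : Set (Fin 4 → ZMod (ℓ ^ m))) = (LinearMap.ker ψ : Set (Fin 4 → ZMod (ℓ ^ m))) := by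
    apply Set.eq_of_subset_of_ncard_le hHker ?_ (Set.toFinite _)
    rw [← Nat.card_coe_set_eq, ← Nat.card_coe_set_eq]
    have e1 : Nat.card ↥((LinearMap.ker ψ : Set (Fin 4 → ZMod (ℓ ^ m)))) =
        Nat.card (LinearMap.ker ψ) := rfl
    have e2 : Nat.card ↥((H : Set (Fin 4 → ZMod (ℓ ^ m)))) = Nat.card H := rfl
    rw [e1, e2, hkcard, hHcard]
  have hfirst : (H : Set (Fin 4 → ZMod (ℓ ^ m))) =
      {y : Fin 4 → ZMod (ℓ ^ m) | ∀ h ∈ H,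
        y 0 * h 1 - y 1 * h 0 + y 2 * h 3 - y 3 * h 2 = (0 : ZMod (ℓ ^ m))} := by
    rw [hsetH]
    ext y
    simpa using hker y
  refine ⟨hfirst, ?_⟩
  intro K hK hHK
  apply le_antisymm _ hHK
  intro k hk
  have : k ∈ (H : Set (Fin 4 → ZMod (ℓ ^ m))) := by
    rw [hfirst]
    intro h hh
    exact hK k hk h (hHK hh)
  exact this
end

section
/- Let ℓ be a prime, m ≥ 1, and let H be a cyclic subgroup of order ℓ^m of the group (ℚ/ℤ)². Then for every integer k ≥ 0, the subgroup {x ∈ (ℚ/ℤ)² : ℓ^k · x ∈ H} is isomorphic as an abelian group to (ZMod ℓ^k) × (ZMod ℓ^{k+m}). -/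
/-!
In `ℚ/ℤ` the elements killed by `n > 0` form the cyclic group generated by `1/n`, so every element
of order `n` generates it. Hence of two elements of `ℓ`-power order one is a multiple of the other,
and a shear automorphism of `(ℚ/ℤ)²` moves the generator of `H` to some `(0, p)`, with `p` of order
`ℓ^m`. For this generator the preimage under `ℓ^k` is the product of the `ℓ^k`-torsion and the
`ℓ^(k+m)`-torsion of `ℚ/ℤ`, cyclic groups of orders `ℓ^k` and `ℓ^(k+m)`.
-/

open AddSubgroup

namespace AddSubgroup

variable {G G' : Type*} [AddCommGroup G] [AddCommGroup G']

theorem map_comap_zsmul (e : G ≃+ G') (n : ℤ) (H : AddSubgroup G) :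
    (comap (DistribSMul.toAddMonoidHom G n) H).map (e : G →+ G') =
      comap (DistribSMul.toAddMonoidHom G' n) (H.map (e : G →+ G')) := by
  ext y
  simp [map_equiv_eq_comap_symm]

theorem comap_zsmul_prod (n : ℤ) (H : AddSubgroup G) (K : AddSubgroup G') :
    comap (DistribSMul.toAddMonoidHom (G × G') n) (H.prod K) =
      (comap (DistribSMul.toAddMonoidHom G n) H).prod
        (comap (DistribSMul.toAddMonoidHom G' n) K) := by
  ext y
  simp [mem_prod]

theorem zmultiples_zero_prod (b : G) :
    zmultiples ((0 : G), b) = (⊥ : AddSubgroup G).prod (zmultiples b) := by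
  ext ⟨y, z⟩
  simp [mem_prod, mem_zmultiples_iff, eq_comm]

theorem exists_addEquiv_apply_eq_zero_prod {u v : G}
    (h : u ∈ zmultiples v ∨ v ∈ zmultiples u) :
    ∃ (e : G × G ≃+ G × G) (b : G), e (u, v) = (0, b) := by
  wlog huv : u ∈ zmultiples v generalizing u v
  · obtain ⟨e, b, he⟩ := this h.symm (h.resolve_left huv)
    exact ⟨AddEquiv.prodComm.trans e, b, he⟩
  obtain ⟨c, rfl⟩ := mem_zmultiples_iff.mp huv
  let shear : G × G ≃+ G × G :=
    { toFun z := (z.1 - c • z.2, z.2)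
      invFun z := (z.1 + c • z.2, z.2)
      left_inv z := by simp
      right_inv z := by simp
      map_add' z w := by
        simp only [Prod.fst_add, Prod.snd_add, smul_add, Prod.mk_add_mk]
        abel_nf }
  exact ⟨shear, v, by simp [shear]⟩

end AddSubgroup

noncomputable def zmultiplesAddEquivZMod {A : Type*} [AddGroup A] {x : A} {n : ℕ}
    (hx : addOrderOf x = n) : zmultiples x ≃+ ZMod n :=
  addEquivOfAddCyclicCardEq (by rw [Nat.card_zmultiples, Nat.card_zmod, hx])

namespace AddCircle

variable {𝕜 : Type*} [Field 𝕜] [LinearOrder 𝕜] [IsStrictOrderedRing 𝕜] {p : 𝕜} [Fact (0 < p)]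

theorem nsmul_eq_zero_iff_mem_zmultiples {n : ℕ} (hn : 0 < n) {u : AddCircle p} :
    n • u = 0 ↔ u ∈ zmultiples ((p / n : 𝕜) : AddCircle p) := by
  constructor
  · rw [AddCircle.nsmul_eq_zero_iff hn]
    rintro ⟨m, -, rfl⟩
    exact ⟨m, by dsimp only; rw [natCast_zsmul, ← coe_nsmul, nsmul_eq_mul]; ring_nf⟩
  · rintro ⟨c, rfl⟩
    have h := addOrderOf_nsmul_eq_zero ((p / n : 𝕜) : AddCircle p)
    rw [addOrderOf_period_div hn] at h
    rw [smul_comm, h, smul_zero]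

theorem zmultiples_eq_zmultiples_period_div {u : AddCircle p} {n : ℕ} (hn : 0 < n)
    (hu : addOrderOf u = n) : zmultiples u = zmultiples ((p / n : 𝕜) : AddCircle p) := by
  have hcard : Nat.card (zmultiples ((p / n : 𝕜) : AddCircle p)) = n := by
    rw [Nat.card_zmultiples, addOrderOf_period_div hn]
  have : Finite (zmultiples ((p / n : 𝕜) : AddCircle p)) := Nat.finite_of_card_ne_zero (by omega)
  refine eq_of_le_of_card_ge ?_ ?_
  · rw [zmultiples_le, ← nsmul_eq_zero_iff_mem_zmultiples hn, ← hu, addOrderOf_nsmul_eq_zero]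
  · rw [hcard, Nat.card_zmultiples, hu]

theorem comap_zsmul_zmultiples_period_div {M N : ℕ} (hM : 0 < M) (hN : 0 < N) :
    comap (DistribSMul.toAddMonoidHom (AddCircle p) (M : ℤ))
        (zmultiples ((p / N : 𝕜) : AddCircle p)) =
      zmultiples ((p / (M * N : ℕ) : 𝕜) : AddCircle p) := by
  ext u
  rw [mem_comap, DistribSMul.toAddMonoidHom_apply, natCast_zsmul,
    ← nsmul_eq_zero_iff_mem_zmultiples hN,
    ← nsmul_eq_zero_iff_mem_zmultiples (Nat.mul_pos hM hN), mul_nsmul]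

theorem comap_zsmul_bot {M : ℕ} (hM : 0 < M) :
    comap (DistribSMul.toAddMonoidHom (AddCircle p) (M : ℤ)) ⊥ =
      zmultiples ((p / M : 𝕜) : AddCircle p) := by
  ext u
  rw [mem_comap, DistribSMul.toAddMonoidHom_apply, natCast_zsmul, mem_bot,
    nsmul_eq_zero_iff_mem_zmultiples hM]

theorem mem_zmultiples_of_addOrderOf_dvd {u v : AddCircle p} (hv : 0 < addOrderOf v)
    (h : addOrderOf u ∣ addOrderOf v) : u ∈ zmultiples v := by
  rw [zmultiples_eq_zmultiples_period_div hv rfl, ← nsmul_eq_zero_iff_mem_zmultiples hv]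
  exact addOrderOf_dvd_iff_nsmul_eq_zero.mp h

theorem exists_addEquiv_apply_eq_zero_prod_of_addOrderOf_eq_prime_pow {ℓ m : ℕ}
    (hℓ : ℓ.Prime) {x : AddCircle p × AddCircle p} (hx : addOrderOf x = ℓ ^ m) :
    ∃ (e : AddCircle p × AddCircle p ≃+ AddCircle p × AddCircle p) (b : AddCircle p),
      e x = (0, b) := by
  obtain ⟨u, v⟩ := x
  rw [Prod.addOrderOf_mk] at hx
  obtain ⟨i, -, hi⟩ := (Nat.dvd_prime_pow hℓ).mp (hx ▸ Nat.dvd_lcm_left _ _)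
  obtain ⟨j, -, hj⟩ := (Nat.dvd_prime_pow hℓ).mp (hx ▸ Nat.dvd_lcm_right _ _)
  apply exists_addEquiv_apply_eq_zero_prod
  rcases le_total i j with hij | hji
  · exact .inl <| mem_zmultiples_of_addOrderOf_dvd (hj ▸ pow_pos hℓ.pos j)
      (hi ▸ hj ▸ pow_dvd_pow ℓ hij)
  · exact .inr <| mem_zmultiples_of_addOrderOf_dvd (hi ▸ pow_pos hℓ.pos i)
      (hi ▸ hj ▸ pow_dvd_pow ℓ hji)

end AddCircle

theorem stmt_9_general (ℓ m : ℕ) (hℓ : ℓ.Prime)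
    (H : AddSubgroup (AddCircle (1 : ℚ) × AddCircle (1 : ℚ)))
    (hH : ∃ x : AddCircle (1 : ℚ) × AddCircle (1 : ℚ),
      addOrderOf x = ℓ ^ m ∧ H = AddSubgroup.zmultiples x)
    (k : ℕ) :
    Nonempty
      ((AddSubgroup.comap
          (DistribMulAction.toAddMonoidHom (AddCircle (1 : ℚ) × AddCircle (1 : ℚ))
            ((ℓ : ℤ) ^ k)) H) ≃+
        (ZMod (ℓ ^ k) × ZMod (ℓ ^ (k + m)))) := by
  have : Fact ((0 : ℚ) < 1) := ⟨one_pos⟩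
  obtain ⟨x, hx, rfl⟩ := hH
  obtain ⟨e, p, hep⟩ :=
    AddCircle.exists_addEquiv_apply_eq_zero_prod_of_addOrderOf_eq_prime_pow hℓ hx
  have hp : addOrderOf p = ℓ ^ m := by
    rw [← hx, ← e.addOrderOf_eq, hep, Prod.addOrderOf_mk, addOrderOf_zero, Nat.lcm_one_left]
  have hM : 0 < ℓ ^ k := pow_pos hℓ.pos k
  have hN : 0 < ℓ ^ m := pow_pos hℓ.pos m
  have hK : (comap (DistribSMul.toAddMonoidHom _ ((ℓ ^ k : ℕ) : ℤ)) (zmultiples x)).map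
        (e : _ →+ _) =
      (zmultiples ((1 / (ℓ ^ k : ℕ) : ℚ) : AddCircle (1 : ℚ))).prod
        (zmultiples ((1 / (ℓ ^ k * ℓ ^ m : ℕ) : ℚ) : AddCircle (1 : ℚ))) := by
    rw [map_comap_zsmul, AddMonoidHom.map_zmultiples, AddMonoidHom.coe_coe, hep,
      zmultiples_zero_prod, comap_zsmul_prod, AddCircle.comap_zsmul_bot hM,
      AddCircle.zmultiples_eq_zmultiples_period_div hN hp,
      AddCircle.comap_zsmul_zmultiples_period_div hM hN]
  rw [pow_add, ← Nat.cast_pow]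
  exact ⟨(e.addSubgroupMap _).trans <| (AddEquiv.addSubgroupCongr hK).trans <|
    (prodEquiv _ _).trans <|
      (zmultiplesAddEquivZMod (AddCircle.addOrderOf_period_div hM)).prodCongr
        (zmultiplesAddEquivZMod (AddCircle.addOrderOf_period_div (Nat.mul_pos hM hN)))⟩

/-- Let `ℓ` be a prime, `m ≥ 1`, and `H` a cyclic subgroup of order `ℓ^m` of `(ℚ/ℤ)²`.
Then for every `k ≥ 0`, the subgroup `{x ∈ (ℚ/ℤ)² : ℓ^k · x ∈ H}` is isomorphic as an
abelian group to `ZMod ℓ^k × ZMod ℓ^{k+m}`. -/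
theorem stmt_9 (ℓ m : ℕ) (hℓ : ℓ.Prime) (hm : 1 ≤ m)
    (H : AddSubgroup (AddCircle (1 : ℚ) × AddCircle (1 : ℚ)))
    (hH : ∃ x : AddCircle (1 : ℚ) × AddCircle (1 : ℚ),
      addOrderOf x = ℓ ^ m ∧ H = AddSubgroup.zmultiples x)
    (k : ℕ) :
    Nonempty
      ((AddSubgroup.comap
          (DistribMulAction.toAddMonoidHom (AddCircle (1 : ℚ) × AddCircle (1 : ℚ))
            ((ℓ : ℤ) ^ k)) H) ≃+
        (ZMod (ℓ ^ k) × ZMod (ℓ ^ (k + m)))) :=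
  stmt_9_general ℓ m hℓ H hH k
end

section
/- Let ℓ be a prime, m ≥ 1, and let M be a 2×2 matrix over ZMod ℓ^m whose characteristic polynomial, reduced modulo ℓ, is irreducible over the field ZMod ℓ. Then M has no nontrivial invariant cyclic subgroup of (ZMod ℓ^m)²; equivalently, for every nonzero x ∈ (ZMod ℓ^m)², the vector M·x does not lie in the cyclic subgroup generated by x. -/
/-!
If `M x = k x` with `x ≠ 0`, then `k - M` kills a nonzero vector, so `det (k - M) = χ_M(k)` is not
a unit of `ZMod (ℓ ^ m)`. The non-units of `ZMod (ℓ ^ m)` are exactly the multiples of `ℓ`, so the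
reduction of `k` modulo `ℓ` is a root of the reduced characteristic polynomial, which is impossible
for an irreducible quadratic.
-/

open Polynomial Matrix

theorem Matrix.not_isUnit_eval_charpoly_of_mulVec_eq_smul {n R : Type*} [Fintype n]
    [DecidableEq n] [CommRing R] (A : Matrix n n R) {x : n → R} (hx : x ≠ 0) {c : R}
    (h : A *ᵥ x = c • x) : ¬IsUnit (A.charpoly.eval c) := by
  rw [eval_charpoly, ← isUnit_iff_isUnit_det]
  rintro ⟨u, hu⟩
  have hker : (u : Matrix n n R) *ᵥ x = 0 := by
    rw [hu, sub_mulVec, h, scalar_apply, sub_eq_zero]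
    ext i
    simp only [mulVec_diagonal, Pi.smul_apply, smul_eq_mul]
  apply hx
  rw [← one_mulVec x, ← u.inv_mul, ← mulVec_mulVec, hker, mulVec_zero]

theorem ZMod.castHom_eq_zero_of_not_isUnit {p m : ℕ} (hp : p.Prime) (hm : m ≠ 0)
    {a : ZMod (p ^ m)} (ha : ¬IsUnit a) : ZMod.castHom (dvd_pow_self p hm) (ZMod p) a = 0 := by
  have : NeZero (p ^ m) := ⟨pow_ne_zero m hp.ne_zero⟩
  rw [← ZMod.natCast_zmod_val a, ZMod.isUnit_iff_coprime,
    Nat.coprime_pow_right_iff (Nat.pos_of_ne_zero hm), Nat.coprime_comm, hp.coprime_iff_not_dvd,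
    not_not] at ha
  rw [ZMod.castHom_apply, ZMod.cast_eq_val, ZMod.natCast_eq_zero_iff]
  exact ha

theorem Matrix.mulVec_notMem_zmultiples_of_irreducible_charpoly_map {ℓ m : ℕ} (hℓ : ℓ.Prime)
    (hm : m ≠ 0) {n : Type*} [Fintype n] [DecidableEq n] [Nontrivial n]
    (M : Matrix n n (ZMod (ℓ ^ m)))
    (hirr : Irreducible (M.charpoly.map (ZMod.castHom (dvd_pow_self ℓ hm) (ZMod ℓ))))
    {x : n → ZMod (ℓ ^ m)} (hx : x ≠ 0) : M *ᵥ x ∉ AddSubgroup.zmultiples x := by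
  have : Fact ℓ.Prime := ⟨hℓ⟩
  set f := ZMod.castHom (dvd_pow_self ℓ hm) (ZMod ℓ)
  rintro ⟨k, hk⟩
  have heig : M *ᵥ x = (k : ZMod (ℓ ^ m)) • x := by rw [← hk, Int.cast_smul_eq_zsmul]
  have hroot : (M.charpoly.map f).IsRoot (f k) := by
    rw [IsRoot, eval_map_apply]
    exact ZMod.castHom_eq_zero_of_not_isUnit hℓ hm
      (M.not_isUnit_eval_charpoly_of_mulVec_eq_smul hx heig)
  have hdeg := natDegree_eq_of_degree_eq_some (degree_eq_one_of_irreducible_of_root hirr hroot)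
  rw [← charpoly_map, charpoly_natDegree_eq_dim] at hdeg
  exact Fintype.one_lt_card.ne' hdeg

/-- Let `ℓ` be a prime, `m ≥ 1`, and `M` a `2×2` matrix over `ZMod ℓ^m` whose characteristic
polynomial, reduced modulo `ℓ`, is irreducible over the field `ZMod ℓ`.  Then `M` has no
nontrivial invariant cyclic subgroup of `(ZMod ℓ^m)²`; equivalently, for every nonzero
`x ∈ (ZMod ℓ^m)²`, the vector `M·x` does not lie in the cyclic subgroup generated by `x`. -/
theorem stmt_12 (ℓ m : ℕ) (hℓ : ℓ.Prime) (hm : 1 ≤ m)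
    (M : Matrix (Fin 2) (Fin 2) (ZMod (ℓ ^ m)))
    (hirr : Irreducible
      (M.charpoly.map (ZMod.castHom (dvd_pow_self ℓ (Nat.one_le_iff_ne_zero.mp hm)) (ZMod ℓ)))) :
    (∀ H : AddSubgroup (Fin 2 → ZMod (ℓ ^ m)),
      (∃ x : Fin 2 → ZMod (ℓ ^ m), H = AddSubgroup.zmultiples x) →
      (∀ h ∈ H, M.mulVec h ∈ H) → H = ⊥) ∧
    ∀ x : Fin 2 → ZMod (ℓ ^ m), x ≠ 0 → M.mulVec x ∉ AddSubgroup.zmultiples x := by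
  have hm₀ : m ≠ 0 := Nat.one_le_iff_ne_zero.mp hm
  have noEigenvector : ∀ x : Fin 2 → ZMod (ℓ ^ m), x ≠ 0 → M *ᵥ x ∉ AddSubgroup.zmultiples x :=
    fun _ ↦ M.mulVec_notMem_zmultiples_of_irreducible_charpoly_map hℓ hm₀ hirr
  refine ⟨?_, noEigenvector⟩
  rintro H ⟨x, rfl⟩ hinv
  by_cases hx : x = 0
  · rw [hx, AddSubgroup.zmultiples_zero_eq_bot]
  · exact absurd (hinv x (AddSubgroup.mem_zmultiples x)) (noEigenvector x hx)
end
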